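/- arXiv:0711.3387 — 9 statements merged into one kernel-verified Lean document; each statement's English description precedes it below -/
import Mathlib

section
/- Let w be a word of length n over a totally ordered alphabet and let h = w_n be its last letter. For any letter a, the word w' = w·a (w with a appended) avoids both patterns 1-12 and 2-21 if and only if w avoids both patterns and, in addition, either h occurs only once in w, or a = h. -/
set_option maxHeartbeats 1000000


/-- `w` contains the generalized pattern 1-12: ∃ i < j < n with w i = w j < w (j+1). -/
def Contains112 {n m : ℕ} (w : Fin n → Fin m) : Prop :=
  ∃ i j k : Fin n, i < j ∧ (j : ℕ) + 1 = (k : ℕ) ∧ w i = w j ∧ w j < w k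

/-- `w` contains the generalized pattern 2-21: ∃ i < j < n with w i = w j > w (j+1). -/
def Contains221 {n m : ℕ} (w : Fin n → Fin m) : Prop :=
  ∃ i j k : Fin n, i < j ∧ (j : ℕ) + 1 = (k : ℕ) ∧ w i = w j ∧ w k < w j

theorem appending_avoids_112_221 {n m : ℕ} (hn : 0 < n) (w : Fin n → Fin m) (a : Fin m)
    (h : Fin m) (hh : h = w ⟨n - 1, by omega⟩) :
    (¬ Contains112 (Fin.snoc w a) ∧ ¬ Contains221 (Fin.snoc w a)) ↔
      ((¬ Contains112 w ∧ ¬ Contains221 w) ∧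
        ((∃! i : Fin n, w i = h) ∨ a = h)) := by
  have hsn : ∀ (x : ℕ) (hx : x < n) (hx' : x < n + 1),
      (Fin.snoc w a : Fin (n+1) → Fin m) ⟨x, hx'⟩ = w ⟨x, hx⟩ := by
    intro x hx hx'
    have : (⟨x, hx'⟩ : Fin (n+1)) = Fin.castSucc ⟨x, hx⟩ := rfl
    rw [this, Fin.snoc_castSucc]
  have hlast : ∀ (hx' : n < n + 1), (Fin.snoc w a : Fin (n+1) → Fin m) ⟨n, hx'⟩ = a := by
    intro hx'
    have : (⟨n, hx'⟩ : Fin (n+1)) = Fin.last n := rfl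
    rw [this, Fin.snoc_last]
  constructor
  · rintro ⟨h1, h2⟩
    refine ⟨⟨?_, ?_⟩, ?_⟩
    · rintro ⟨i, j, k, hij, hjk, he, hlt⟩
      apply h1
      refine ⟨⟨i.1, by omega⟩, ⟨j.1, by omega⟩, ⟨k.1, by omega⟩, ?_, ?_, ?_, ?_⟩
      · exact hij
      · exact hjk
      · rw [hsn i.1 i.2, hsn j.1 j.2]; exact he
      · rw [hsn j.1 j.2, hsn k.1 k.2]; exact hlt
    · rintro ⟨i, j, k, hij, hjk, he, hlt⟩
      apply h2
      refine ⟨⟨i.1, by omega⟩, ⟨j.1, by omega⟩, ⟨k.1, by omega⟩, ?_, ?_, ?_, ?_⟩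
      · exact hij
      · exact hjk
      · rw [hsn i.1 i.2, hsn j.1 j.2]; exact he
      · rw [hsn j.1 j.2, hsn k.1 k.2]; exact hlt
    · by_cases ha : a = h
      · exact Or.inr ha
      · left
        refine ⟨⟨n - 1, by omega⟩, hh.symm, ?_⟩
        intro y hy
        by_contra hne
        have hy1 : y.1 < n - 1 := by
          have := y.2
          have hne' : y.1 ≠ n - 1 := fun hc => hne (Fin.ext hc)
          omega
        rcases lt_or_gt_of_ne (fun hc => ha hc) with hlt | hlt
        · -- a < h : pattern 2-21 with i = y, j = n-1, k = n
          apply h2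
          refine ⟨⟨y.1, by omega⟩, ⟨n - 1, by omega⟩, ⟨n, by omega⟩,
            ?_, ?_, ?_, ?_⟩
          · exact hy1
          · simp; omega
          · rw [hsn y.1 y.2, hsn (n-1) (by omega)]
            rw [hy]; exact hh
          · rw [hlast, hsn (n-1) (by omega)]
            rw [← hh]; exact hlt
        · apply h1
          refine ⟨⟨y.1, by omega⟩, ⟨n - 1, by omega⟩, ⟨n, by omega⟩,
            ?_, ?_, ?_, ?_⟩
          · exact hy1
          · simp; omega
          · rw [hsn y.1 y.2, hsn (n-1) (by omega)]
            rw [hy]; exact hh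
          · rw [hlast, hsn (n-1) (by omega)]
            rw [← hh]; exact hlt
  · rintro ⟨⟨h1, h2⟩, hu⟩
    constructor
    · rintro ⟨i, j, k, hij, hjk, he, hlt⟩
      by_cases hk : k.1 < n
      · apply h1
        have hjn : j.1 < n := by omega
        have hin : i.1 < n := by have : (i:ℕ) < (j:ℕ) := hij; omega
        refine ⟨⟨i.1, hin⟩, ⟨j.1, hjn⟩, ⟨k.1, hk⟩, hij, hjk, ?_, ?_⟩
        · have ei : (Fin.snoc w a : Fin (n+1) → Fin m) i = w ⟨i.1, hin⟩ := hsn i.1 hin i.2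
          have ej : (Fin.snoc w a : Fin (n+1) → Fin m) j = w ⟨j.1, hjn⟩ := hsn j.1 hjn j.2
          rw [ei, ej] at he; exact he
        · have ej : (Fin.snoc w a : Fin (n+1) → Fin m) j = w ⟨j.1, hjn⟩ := hsn j.1 hjn j.2
          have ek : (Fin.snoc w a : Fin (n+1) → Fin m) k = w ⟨k.1, hk⟩ := hsn k.1 hk k.2
          rw [ej, ek] at hlt; exact hlt
      · have hk' : k.1 = n := by have := k.2; omega
        have hj' : j.1 = n - 1 := by omega
        have hin : i.1 < n - 1 := by have : (i:ℕ) < (j:ℕ) := hij; omega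
        have hkk : k = ⟨n, by omega⟩ := Fin.ext hk'
        have hjj : j = ⟨n - 1, by omega⟩ := Fin.ext hj'
        have ek : (Fin.snoc w a : Fin (n+1) → Fin m) k = a := by
          rw [hkk]; exact hlast (by omega)
        have ej : (Fin.snoc w a : Fin (n+1) → Fin m) j = h := by
          rw [hjj]; rw [hsn (n-1) (by omega) (by omega)]; exact hh.symm
        have ei : (Fin.snoc w a : Fin (n+1) → Fin m) i = w ⟨i.1, by omega⟩ :=
          hsn i.1 (by omega) i.2
        rw [ek, ej] at hlt
        have he' : w ⟨i.1, by omega⟩ = h := ei.symm.trans (he.trans ej)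
        rcases hu with ⟨z, hz1, hz2⟩ | ha
        · have v1 : i.1 = z.1 := congrArg Fin.val (hz2 _ he')
          have v2 : n - 1 = z.1 := congrArg Fin.val (hz2 _ hh.symm)
          omega
        · rw [ha] at hlt; exact lt_irrefl _ hlt
    · rintro ⟨i, j, k, hij, hjk, he, hlt⟩
      by_cases hk : k.1 < n
      · apply h2
        have hjn : j.1 < n := by omega
        have hin : i.1 < n := by have : (i:ℕ) < (j:ℕ) := hij; omega
        refine ⟨⟨i.1, hin⟩, ⟨j.1, hjn⟩, ⟨k.1, hk⟩, hij, hjk, ?_, ?_⟩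
        · have ei : (Fin.snoc w a : Fin (n+1) → Fin m) i = w ⟨i.1, hin⟩ := hsn i.1 hin i.2
          have ej : (Fin.snoc w a : Fin (n+1) → Fin m) j = w ⟨j.1, hjn⟩ := hsn j.1 hjn j.2
          rw [ei, ej] at he; exact he
        · have ej : (Fin.snoc w a : Fin (n+1) → Fin m) j = w ⟨j.1, hjn⟩ := hsn j.1 hjn j.2
          have ek : (Fin.snoc w a : Fin (n+1) → Fin m) k = w ⟨k.1, hk⟩ := hsn k.1 hk k.2
          rw [ej, ek] at hlt; exact hlt
      · have hk' : k.1 = n := by have := k.2; omega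
        have hj' : j.1 = n - 1 := by omega
        have hin : i.1 < n - 1 := by have : (i:ℕ) < (j:ℕ) := hij; omega
        have hkk : k = ⟨n, by omega⟩ := Fin.ext hk'
        have hjj : j = ⟨n - 1, by omega⟩ := Fin.ext hj'
        have ek : (Fin.snoc w a : Fin (n+1) → Fin m) k = a := by
          rw [hkk]; exact hlast (by omega)
        have ej : (Fin.snoc w a : Fin (n+1) → Fin m) j = h := by
          rw [hjj]; rw [hsn (n-1) (by omega) (by omega)]; exact hh.symm
        have ei : (Fin.snoc w a : Fin (n+1) → Fin m) i = w ⟨i.1, by omega⟩ :=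
          hsn i.1 (by omega) i.2
        rw [ek, ej] at hlt
        have he' : w ⟨i.1, by omega⟩ = h := ei.symm.trans (he.trans ej)
        rcases hu with ⟨z, hz1, hz2⟩ | ha
        · have v1 : i.1 = z.1 := congrArg Fin.val (hz2 _ he')
          have v2 : n - 1 = z.1 := congrArg Fin.val (hz2 _ hh.symm)
          omega
        · rw [ha] at hlt; exact lt_irrefl _ hlt
end

section
/- Let w be a word of length n ≥ 1 over a totally ordered alphabet with last letter h = w_n. For any letter a, the word w·a avoids both patterns 1-21 and 2-12 if and only if w avoids both patterns and, in addition, either a = h or a does not occur in w. -/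
/-- `w` contains the generalized pattern 1-21: ∃ i < j < n with w i = w (j+1) < w j. -/
def Contains121 {n m : ℕ} (w : Fin n → Fin m) : Prop :=
  ∃ i j k : Fin n, i < j ∧ (j : ℕ) + 1 = (k : ℕ) ∧ w i = w k ∧ w i < w j

/-- `w` contains the generalized pattern 2-12: ∃ i < j < n with w i = w (j+1) > w j. -/
def Contains212 {n m : ℕ} (w : Fin n → Fin m) : Prop :=
  ∃ i j k : Fin n, i < j ∧ (j : ℕ) + 1 = (k : ℕ) ∧ w i = w k ∧ w j < w i

private lemma snoc_lt {n m : ℕ} (w : Fin n → Fin m) (a : Fin m) (x : Fin (n+1))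
    (hx : (x : ℕ) < n) : (Fin.snoc w a : Fin (n+1) → Fin m) x = w ⟨x, hx⟩ := by
  simp [Fin.snoc, hx]
  rfl

private lemma snoc_last' {n m : ℕ} (w : Fin n → Fin m) (a : Fin m) (x : Fin (n+1))
    (hx : (x : ℕ) = n) : (Fin.snoc w a : Fin (n+1) → Fin m) x = a := by
  simp [Fin.snoc, hx]

theorem appending_avoids_121_212 {n m : ℕ} (hn : 1 ≤ n) (w : Fin n → Fin m) (a : Fin m)
    (h : Fin m) (hh : h = w ⟨n - 1, by omega⟩) :
    (¬ Contains121 (Fin.snoc w a) ∧ ¬ Contains212 (Fin.snoc w a)) ↔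
      ((¬ Contains121 w ∧ ¬ Contains212 w) ∧
        (a = h ∨ ¬ ∃ i : Fin n, w i = a)) := by
  subst hh
  constructor
  · rintro ⟨h1, h2⟩
    refine ⟨⟨?_, ?_⟩, ?_⟩
    · rintro ⟨i, j, k, hij, hjk, he, hlt⟩
      exact h1 ⟨i.castSucc, j.castSucc, k.castSucc, by simpa using hij,
        by simpa using hjk, by simpa using he, by simpa using hlt⟩
    · rintro ⟨i, j, k, hij, hjk, he, hlt⟩
      exact h2 ⟨i.castSucc, j.castSucc, k.castSucc, by simpa using hij,
        by simpa using hjk, by simpa using he, by simpa using hlt⟩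
    · by_contra hc
      push_neg at hc
      obtain ⟨hne, i, hi⟩ := hc
      have hine : (i : ℕ) ≠ n - 1 := by
        intro hq
        apply hne
        rw [← hi]; congr 1; ext; simpa using hq
      have hilt : (i : ℕ) < n - 1 := by have := i.isLt; omega
      set i' : Fin (n+1) := ⟨(i : ℕ), by omega⟩
      set j' : Fin (n+1) := ⟨n - 1, by omega⟩
      set k' : Fin (n+1) := ⟨n, by omega⟩
      have hvi : (Fin.snoc w a : Fin (n+1) → Fin m) i' = a := by
        rw [snoc_lt w a i' (by simp only [i']; omega)]
        simpa using hi
      have hvj : (Fin.snoc w a : Fin (n+1) → Fin m) j' = w ⟨n - 1, by omega⟩ := by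
        rw [snoc_lt w a j' (by simp only [j']; omega)]
      have hvk : (Fin.snoc w a : Fin (n+1) → Fin m) k' = a := snoc_last' w a k' rfl
      have hij' : i' < j' := by simp only [Fin.lt_def, i', j']; omega
      have hjk' : (j' : ℕ) + 1 = (k' : ℕ) := by simp only [i', j', k']; omega
      rcases lt_trichotomy a (w ⟨n - 1, by omega⟩) with hx | hx | hx
      · exact h1 ⟨i', j', k', hij', hjk', by rw [hvi, hvk], by rw [hvi, hvj]; exact hx⟩
      · exact hne hx
      · exact h2 ⟨i', j', k', hij', hjk', by rw [hvi, hvk], by rw [hvi, hvj]; exact hx⟩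
  · rintro ⟨⟨h1, h2⟩, hor⟩
    constructor <;> rintro ⟨i, j, k, hij, hjk, he, hlt⟩
    · rcases lt_or_eq_of_le (Nat.le_of_lt_succ k.isLt) with hk | hk
      · have hji : (i : ℕ) < n := by omega
        have hjj : (j : ℕ) < n := by omega
        rw [snoc_lt w a i hji] at he hlt
        rw [snoc_lt w a k hk] at he
        rw [snoc_lt w a j hjj] at hlt
        exact h1 ⟨⟨i, hji⟩, ⟨j, hjj⟩, ⟨k, hk⟩, by exact hij, by exact hjk, he, hlt⟩
      · have hji : (i : ℕ) < n := by have := hij; rw [Fin.lt_def] at this; omega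
        have hjj : (j : ℕ) < n := by omega
        rw [snoc_lt w a i hji] at he hlt
        rw [snoc_last' w a k hk] at he
        rw [snoc_lt w a j hjj] at hlt
        have hjv : (⟨(j : ℕ), hjj⟩ : Fin n) = ⟨n - 1, by omega⟩ := by ext; simp; omega
        rw [hjv] at hlt
        rcases hor with hx | hx
        · rw [he, hx] at hlt; exact lt_irrefl _ hlt
        · exact hx ⟨⟨i, hji⟩, he⟩
    · rcases lt_or_eq_of_le (Nat.le_of_lt_succ k.isLt) with hk | hk
      · have hji : (i : ℕ) < n := by omega
        have hjj : (j : ℕ) < n := by omega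
        rw [snoc_lt w a i hji] at he hlt
        rw [snoc_lt w a k hk] at he
        rw [snoc_lt w a j hjj] at hlt
        exact h2 ⟨⟨i, hji⟩, ⟨j, hjj⟩, ⟨k, hk⟩, by exact hij, by exact hjk, he, hlt⟩
      · have hji : (i : ℕ) < n := by have := hij; rw [Fin.lt_def] at this; omega
        have hjj : (j : ℕ) < n := by omega
        rw [snoc_lt w a i hji] at he hlt
        rw [snoc_last' w a k hk] at he
        rw [snoc_lt w a j hjj] at hlt
        have hjv : (⟨(j : ℕ), hjj⟩ : Fin n) = ⟨n - 1, by omega⟩ := by ext; simp; omega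
        rw [hjv] at hlt
        rcases hor with hx | hx
        · rw [he, hx] at hlt; exact lt_irrefl _ hlt
        · exact hx ⟨⟨i, hji⟩, he⟩
end

section
/- A word w of length n avoids both patterns 1-21 and 2-12 if and only if the set of occurrence positions of each letter of w is an interval of consecutive integers (i.e., whenever w_p = w_q = c with p < q, then w_r = c for all p ≤ r ≤ q). -/
theorem avoids_121_212_iff {n m : ℕ} (w : Fin n → Fin m) :
    (¬ Contains121 w ∧ ¬ Contains212 w) ↔
      (∀ p q r : Fin n, p ≤ r → r ≤ q → w p = w q → w r = w p) := by
  constructor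
  · rintro ⟨h1, h2⟩ p q r hpr hrq hpq
    have key : ∀ d : ℕ, ∀ r : Fin n, p ≤ r → r ≤ q → (q : ℕ) - (r : ℕ) = d → w r = w p := by
      intro d
      induction d with
      | zero =>
        intro r hpr hrq hd
        have hrq' : (r : ℕ) ≤ q := hrq
        have : r = q := Fin.ext (by omega)
        rw [this, ← hpq]
      | succ d ih =>
        intro r hpr hrq hd
        have hrq' : (r : ℕ) < (q : ℕ) := by omega
        have hr1 : (r : ℕ) + 1 < n := lt_of_le_of_lt hrq' q.isLt
        set r' : Fin n := ⟨(r : ℕ) + 1, hr1⟩ with hr'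
        have hv : (r' : ℕ) = (r : ℕ) + 1 := rfl
        have hpr' : p ≤ r' := by
          have : (p : ℕ) ≤ r := hpr
          exact Fin.mk_le_mk.mpr (by omega) |>.trans_eq rfl
        have hr'q : r' ≤ q := by
          show (r' : ℕ) ≤ q; omega
        have hwr' : w r' = w p := ih r' hpr' hr'q (by show (q : ℕ) - ((r : ℕ) + 1) = d; omega)
        by_contra hne
        have hplr : p < r := by
          rcases lt_or_eq_of_le hpr with h | h
          · exact h
          · exact absurd (by rw [← h]) hne
        rcases lt_or_gt_of_ne (fun h => hne h.symm) with hlt | hgt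
        · exact h1 ⟨p, r, r', hplr, rfl, hwr'.symm, hlt⟩
        · exact h2 ⟨p, r, r', hplr, rfl, hwr'.symm, hgt⟩
    exact key ((q : ℕ) - (r : ℕ)) r hpr hrq rfl
  · intro h
    constructor
    · rintro ⟨i, j, k, hij, hjk, heq, hlt⟩
      have hjk' : j ≤ k := by show (j : ℕ) ≤ k; omega
      have := h i k j hij.le hjk' heq
      exact absurd this (by rw [this] at hlt; exact fun h' => lt_irrefl _ hlt)
    · rintro ⟨i, j, k, hij, hjk, heq, hlt⟩
      have hjk' : j ≤ k := by show (j : ℕ) ≤ k; omega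
      have := h i k j hij.le hjk' heq
      rw [this] at hlt; exact lt_irrefl _ hlt
end

section
/- For integers 1 ≤ k ≤ n, the number of words of length n over {1,...,k} that use every letter of {1,...,k} and avoid both patterns 1-12 and 2-21 equals n! if k = n, and equals k·k! if k < n. -/
section Aux

variable {n k : ℕ} {w : Fin n → Fin k}

lemma step_lemma (h1 : ¬ Contains112 w) (h2 : ¬ Contains221 w)
    {i j : Fin n} (hij : i < j) (hj : (j : ℕ) + 1 < n) (he : w i = w j) :
    w ⟨(j : ℕ) + 1, hj⟩ = w j := by
  rcases lt_trichotomy (w ⟨(j : ℕ) + 1, hj⟩) (w j) with h | h | h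
  · exact absurd ⟨i, j, ⟨(j : ℕ) + 1, hj⟩, hij, rfl, he, h⟩ h2
  · exact h
  · exact absurd ⟨i, j, ⟨(j : ℕ) + 1, hj⟩, hij, rfl, he, h⟩ h1

lemma const_after (h1 : ¬ Contains112 w) (h2 : ¬ Contains221 w)
    {i j : Fin n} (hij : i < j) (he : w i = w j) :
    ∀ t, ∀ ht : (j : ℕ) + t < n, w ⟨(j : ℕ) + t, ht⟩ = w j := by
  intro t
  induction t with
  | zero => intro ht; congr 1
  | succ t ih =>
    intro ht
    have ht' : (j : ℕ) + t < n := by omega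
    have hw := ih ht'
    have hij' : i < (⟨(j : ℕ) + t, ht'⟩ : Fin n) := by
      rw [Fin.lt_def] at hij ⊢; simp; omega
    have hstep := step_lemma h1 h2 hij'
      (by show (j : ℕ) + t + 1 < n; omega : ((⟨(j : ℕ) + t, ht'⟩ : Fin n) : ℕ) + 1 < n)
      (he.trans hw.symm)
    rw [hw] at hstep
    convert hstep using 2
    ext; simp; omega

lemma index_ge (hs : Function.Surjective w) (h1 : ¬ Contains112 w) (h2 : ¬ Contains221 w)
    {a b : Fin n} (hab : a < b) (he : w a = w b) : k ≤ (b : ℕ) := by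
  have hsur : Function.Surjective (fun t : Fin (b : ℕ) => w ⟨(t : ℕ), lt_trans t.2 b.2⟩) := by
    intro c
    obtain ⟨m, hm⟩ := hs c
    by_cases hmb : (m : ℕ) < (b : ℕ)
    · exact ⟨⟨(m : ℕ), hmb⟩, hm⟩
    · have h0 := const_after h1 h2 hab he ((m : ℕ) - (b : ℕ)) (by omega)
      have hm' : w m = w b := by
        rw [← h0]; congr 1; ext; simp; omega
      refine ⟨⟨(a : ℕ), hab⟩, ?_⟩
      rw [← hm, hm', ← he]
  have := Fintype.card_le_of_surjective _ hsur
  simpa using this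

lemma prefix_inj (hs : Function.Surjective w) (h1 : ¬ Contains112 w) (h2 : ¬ Contains221 w)
    {a b : Fin n} (ha : (a : ℕ) < k) (hb : (b : ℕ) < k) (he : w a = w b) : a = b := by
  rcases lt_trichotomy a b with h | h | h
  · exact absurd (index_ge hs h1 h2 h he) (by omega)
  · exact h
  · exact absurd (index_ge hs h1 h2 h he.symm) (by omega)

lemma tail_const (hs : Function.Surjective w) (h1 : ¬ Contains112 w) (h2 : ¬ Contains221 w)
    (hkn : k < n) {m : Fin n} (hm : k ≤ (m : ℕ)) : w m = w ⟨k, hkn⟩ := by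
  set u : Fin k → Fin k := fun i => w (Fin.castLE hkn.le i) with hu
  have hinj : Function.Injective u := by
    intro x y hxy
    have := prefix_inj hs h1 h2 (a := Fin.castLE hkn.le x) (b := Fin.castLE hkn.le y)
      (by simpa using x.2) (by simpa using y.2) hxy
    exact Fin.castLE_injective hkn.le this
  have husur : Function.Surjective u := Finite.surjective_of_injective hinj
  obtain ⟨a, ha⟩ := husur (w ⟨k, hkn⟩)
  have hlt : Fin.castLE hkn.le a < (⟨k, hkn⟩ : Fin n) := by
    rw [Fin.lt_def]; simpa using a.2
  have h0 := const_after h1 h2 hlt ha ((m : ℕ) - k) (by simp; omega)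
  rw [← h0]; congr 1; ext; simp; omega

end Aux

theorem count_reduced_words_112_221 (n k : ℕ) (hk : 1 ≤ k) (hkn : k ≤ n) :
    Nat.card {w : Fin n → Fin k //
        Function.Surjective w ∧ ¬ Contains112 w ∧ ¬ Contains221 w} =
      if k = n then Nat.factorial n else k * Nat.factorial k := by
  rcases eq_or_lt_of_le hkn with heq | hlt
  · subst heq
    rw [if_pos rfl]
    have hiff : ∀ w : Fin k → Fin k,
        (Function.Surjective w ∧ ¬ Contains112 w ∧ ¬ Contains221 w) ↔ Function.Bijective w := by
      intro w
      constructor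
      · rintro ⟨hs, -, -⟩
        exact (Finite.surjective_iff_bijective).1 hs
      · intro hb
        refine ⟨hb.2, ?_, ?_⟩
        · rintro ⟨i, j, m, hij, -, he, -⟩
          exact absurd (hb.1 he) (ne_of_lt hij)
        · rintro ⟨i, j, m, hij, -, he, -⟩
          exact absurd (hb.1 he) (ne_of_lt hij)
    have e1 : {w : Fin k → Fin k //
        Function.Surjective w ∧ ¬ Contains112 w ∧ ¬ Contains221 w} ≃
        {w : Fin k → Fin k // Function.Bijective w} :=
      Equiv.subtypeEquivRight hiff
    have e2 : {w : Fin k → Fin k // Function.Bijective w} ≃ Equiv.Perm (Fin k) :=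
      { toFun := fun f => Equiv.ofBijective f.1 f.2
        invFun := fun e => ⟨e, e.bijective⟩
        left_inv := fun f => rfl
        right_inv := fun e => Equiv.ext fun x => rfl }
    rw [Nat.card_congr (e1.trans e2), Nat.card_eq_fintype_card, Fintype.card_perm,
      Fintype.card_fin]
  · rw [if_neg (by omega)]
    have E : ((Fin k ≃ Fin k) × Fin k) ≃ {w : Fin n → Fin k //
        Function.Surjective w ∧ ¬ Contains112 w ∧ ¬ Contains221 w} := by
      refine Equiv.ofBijective (fun p => ⟨fun i => if h : (i : ℕ) < k then p.1 ⟨i, h⟩ else p.2,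
        ?_, ?_, ?_⟩) ⟨?_, ?_⟩
      · -- surjective
        intro c
        refine ⟨Fin.castLE hkn (p.1.symm c), ?_⟩
        simp only
        rw [dif_pos (by simpa using (p.1.symm c).2)]
        simp
      · -- ¬ 112
        rintro ⟨i, j, m, hij, hjm, he, hlt'⟩
        dsimp only at he hlt'
        by_cases hj : (j : ℕ) < k
        · have hi : (i : ℕ) < k := by rw [Fin.lt_def] at hij; omega
          rw [dif_pos hi, dif_pos hj] at he
          have := p.1.injective he
          rw [Fin.lt_def] at hij
          simp only [Fin.mk.injEq] at this
          omega
        · have hm : ¬ (m : ℕ) < k := by omega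
          rw [dif_neg hj, dif_neg hm] at hlt'
          exact lt_irrefl _ hlt'
      · -- ¬ 221
        rintro ⟨i, j, m, hij, hjm, he, hlt'⟩
        dsimp only at he hlt'
        by_cases hj : (j : ℕ) < k
        · have hi : (i : ℕ) < k := by rw [Fin.lt_def] at hij; omega
          rw [dif_pos hi, dif_pos hj] at he
          have := p.1.injective he
          rw [Fin.lt_def] at hij
          simp only [Fin.mk.injEq] at this
          omega
        · have hm : ¬ (m : ℕ) < k := by omega
          rw [dif_neg hj, dif_neg hm] at hlt'
          exact lt_irrefl _ hlt'
      · -- injective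
        rintro ⟨σ, c⟩ ⟨τ, d⟩ hpq
        have hfun : (fun i : Fin n => if h : (i : ℕ) < k then σ ⟨i, h⟩ else c) =
            (fun i : Fin n => if h : (i : ℕ) < k then τ ⟨i, h⟩ else d) :=
          congrArg Subtype.val hpq
        have hσ : σ = τ := by
          ext x
          have := congrFun hfun (Fin.castLE hkn x)
          rw [dif_pos (by simpa using x.2), dif_pos (by simpa using x.2)] at this
          simpa using congrArg Fin.val this
        have hc : c = d := by
          have := congrFun hfun ⟨k, hlt⟩
          rw [dif_neg (by simp), dif_neg (by simp)] at this
          exact this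
        simp [hσ, hc]
      · -- surjective
        rintro ⟨w, hs, h1, h2⟩
        set u : Fin k → Fin k := fun i => w (Fin.castLE hkn i) with hu
        have hinj : Function.Injective u := by
          intro x y hxy
          exact Fin.castLE_injective hkn
            (prefix_inj hs h1 h2 (by simpa using x.2) (by simpa using y.2) hxy)
        have hbij : Function.Bijective u := (Finite.injective_iff_bijective).1 hinj
        refine ⟨⟨Equiv.ofBijective u hbij, w ⟨k, hlt⟩⟩, Subtype.ext (funext fun i => ?_)⟩
        dsimp only
        by_cases hik : (i : ℕ) < k
        · rw [dif_pos hik]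
          rfl
        · rw [dif_neg hik]
          exact (tail_const hs h1 h2 hlt (m := i) (by omega)).symm
    rw [← Nat.card_congr E, Nat.card_eq_fintype_card, Fintype.card_prod, Fintype.card_perm,
      Fintype.card_fin]
    exact Nat.mul_comm _ _
end

section
/- Let m, n ≥ 1. The number of words of length n over {1,...,m} avoiding both patterns 1-12 and 2-21 equals (m)_n + Σ_{k=1}^{n-1} k·(m)_k when n ≤ m, and equals Σ_{k=1}^{m} k·(m)_k when n > m, where (m)_k = m(m-1)···(m-k+1) is the falling factorial. -/
def NoPat {n m : ℕ} (w : Fin n → Fin m) : Prop :=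
  ∀ i j k : Fin n, i < j → (j : ℕ) + 1 = (k : ℕ) → w i = w j → w k = w j

lemma good_iff {n m : ℕ} (w : Fin n → Fin m) :
    (¬ Contains112 w ∧ ¬ Contains221 w) ↔ NoPat w := by
  constructor
  · rintro ⟨h1, h2⟩ i j k hij hjk hw
    by_contra hne
    rcases lt_or_gt_of_ne hne with h | h
    · exact h2 ⟨i, j, k, hij, hjk, hw, h⟩
    · exact h1 ⟨i, j, k, hij, hjk, hw, h⟩
  · intro h
    constructor
    · rintro ⟨i, j, k, hij, hjk, hw, hlt⟩
      exact absurd (h i j k hij hjk hw) hlt.ne'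
    · rintro ⟨i, j, k, hij, hjk, hw, hlt⟩
      exact absurd (h i j k hij hjk hw) hlt.ne

abbrev Dom (n m : ℕ) :=
  (Fin n ↪ Fin m) ⊕ (Σ k : Fin (n - 1), (Fin ((k : ℕ) + 1) ↪ Fin m) × Fin ((k : ℕ) + 1))

def toWord {n m : ℕ} : Dom n m → (Fin n → Fin m)
  | .inl f => fun j => f j
  | .inr ⟨k, f, i⟩ => fun j => if h : (j : ℕ) < (k : ℕ) + 1 then f ⟨j, h⟩ else f i

lemma toWord_good {n m : ℕ} (d : Dom n m) : NoPat (toWord d) := by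
  intro i j k hij hjk hw
  cases d with
  | inl f =>
      exact absurd (f.injective hw) hij.ne
  | inr p =>
      obtain ⟨k0, f, i0⟩ := p
      simp only [toWord] at hw ⊢
      by_cases hj : (j : ℕ) < (k0 : ℕ) + 1
      · have hi : (i : ℕ) < (k0 : ℕ) + 1 := lt_trans hij hj
        rw [dif_pos hi, dif_pos hj] at hw
        have h3 := f.injective hw
        have h2 : (i : ℕ) = (j : ℕ) := Fin.mk.inj h3
        exact absurd (Fin.ext h2 : i = j) hij.ne
      · have hk : ¬ ((k : ℕ) < (k0 : ℕ) + 1) := by omega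
        rw [dif_neg hk, dif_neg hj]

lemma toWord_injective {n m : ℕ} : Function.Injective (toWord (n := n) (m := m)) := by
  intro a b hab
  have key : ∀ (k0 : Fin (n-1)) (f : Fin ((k0:ℕ)+1) ↪ Fin m) (i0 : Fin ((k0:ℕ)+1)),
      ¬ Function.Injective (toWord (.inr ⟨k0, f, i0⟩)) := by
    intro k0 f i0 hinj
    have hlt : ((i0 : ℕ) : ℕ) < n := by have := k0.isLt; have := i0.isLt; omega
    have hlt2 : (k0 : ℕ) + 1 < n := by have := k0.isLt; omega
    have h1 : toWord (.inr ⟨k0, f, i0⟩) ⟨(i0 : ℕ), hlt⟩ = f i0 := by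
      simp only [toWord]
      rw [dif_pos i0.isLt]
    have h2 : toWord (.inr ⟨k0, f, i0⟩) ⟨(k0 : ℕ) + 1, hlt2⟩ = f i0 := by
      simp only [toWord]
      rw [dif_neg (by omega)]
    have := hinj (h1.trans h2.symm)
    have : (i0 : ℕ) = (k0 : ℕ) + 1 := congrArg Fin.val this
    have := i0.isLt; omega
  cases a with
  | inl f =>
      cases b with
      | inl g =>
          congr 1
          ext j
          exact congrArg Fin.val (congrFun hab j)
      | inr p =>
          obtain ⟨k0, f0, i0⟩ := p
          exact absurd (hab ▸ f.injective) (key k0 f0 i0)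
  | inr p =>
      obtain ⟨k0, f0, i0⟩ := p
      cases b with
      | inl g =>
          exact absurd (hab ▸ g.injective) (key k0 f0 i0)
      | inr q =>
          obtain ⟨k1, f1, i1⟩ := q
          -- first show k0 = k1
          have hkk : (k0 : ℕ) = (k1 : ℕ) := by
            by_contra hne
            -- wlog via symmetric argument
            have main : ∀ (a0 : Fin (n-1)) (g0 : Fin ((a0:ℕ)+1) ↪ Fin m) (j0 : Fin ((a0:ℕ)+1))
                (a1 : Fin (n-1)) (g1 : Fin ((a1:ℕ)+1) ↪ Fin m) (j1 : Fin ((a1:ℕ)+1)),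
                (a0 : ℕ) < (a1 : ℕ) →
                toWord (.inr ⟨a0, g0, j0⟩) = toWord (.inr ⟨a1, g1, j1⟩) → False := by
              intro a0 g0 j0 a1 g1 j1 hlt heq
              have ha1 : (a1 : ℕ) < n - 1 := a1.isLt
              have hpos : (a0 : ℕ) + 1 < n := by omega
              have hj0 : ((j0 : ℕ) : ℕ) < n := by have := j0.isLt; omega
              -- word0 at position a0+1 equals word0 at position j0
              have e1 : toWord (.inr ⟨a0, g0, j0⟩) ⟨(a0:ℕ)+1, hpos⟩ = g0 j0 := by
                simp only [toWord]; rw [dif_neg (by omega)]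
              have e2 : toWord (.inr ⟨a0, g0, j0⟩) ⟨(j0:ℕ), hj0⟩ = g0 j0 := by
                simp only [toWord]; rw [dif_pos j0.isLt]
              -- word1 at those positions: both < a1+1, distinct indices
              have e3 : toWord (.inr ⟨a1, g1, j1⟩) ⟨(a0:ℕ)+1, hpos⟩
                  = g1 ⟨(a0:ℕ)+1, by omega⟩ := by
                simp only [toWord]; rw [dif_pos (by omega)]
              have e4 : toWord (.inr ⟨a1, g1, j1⟩) ⟨(j0:ℕ), hj0⟩
                  = g1 ⟨(j0:ℕ), by have := j0.isLt; omega⟩ := by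
                simp only [toWord]; rw [dif_pos (by have := j0.isLt; omega)]
              have : g1 ⟨(a0:ℕ)+1, by omega⟩ = g1 ⟨(j0:ℕ), by have := j0.isLt; omega⟩ := by
                rw [← e3, ← e4, ← heq, e1, e2]
              have := congrArg Fin.val (g1.injective this)
              simp at this
              have := j0.isLt; omega
            rcases Nat.lt_or_ge (k0 : ℕ) (k1 : ℕ) with h | h
            · exact main k0 f0 i0 k1 f1 i1 h hab
            · exact main k1 f1 i1 k0 f0 i0 (by omega) hab.symm
          have hk : k0 = k1 := Fin.ext hkk
          subst hk
          -- now f0 = f1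
          have hff : f0 = f1 := by
            ext p
            have hp : ((p : ℕ) : ℕ) < n := by have := p.isLt; have := k0.isLt; omega
            have e1 : toWord (.inr ⟨k0, f0, i0⟩) ⟨(p:ℕ), hp⟩ = f0 p := by
              simp only [toWord]; rw [dif_pos p.isLt]
            have e2 : toWord (.inr ⟨k0, f1, i1⟩) ⟨(p:ℕ), hp⟩ = f1 p := by
              simp only [toWord]; rw [dif_pos p.isLt]
            have := congrFun hab (⟨(p:ℕ), hp⟩ : Fin n)
            rw [e1, e2] at this
            exact congrArg Fin.val this
          subst hff
          have hii : i0 = i1 := by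
            have hpos : (k0 : ℕ) + 1 < n := by have := k0.isLt; omega
            have e1 : toWord (.inr ⟨k0, f0, i0⟩) ⟨(k0:ℕ)+1, hpos⟩ = f0 i0 := by
              simp only [toWord]; rw [dif_neg (by omega)]
            have e2 : toWord (.inr ⟨k0, f0, i1⟩) ⟨(k0:ℕ)+1, hpos⟩ = f0 i1 := by
              simp only [toWord]; rw [dif_neg (by omega)]
            have := congrFun hab (⟨(k0:ℕ)+1, hpos⟩ : Fin n)
            rw [e1, e2] at this
            exact f0.injective this
          rw [hii]

lemma toWord_surjective {n m : ℕ} (hn : 1 ≤ n) (w : Fin n → Fin m) (hw : NoPat w) :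
    ∃ d : Dom n m, toWord d = w := by
  by_cases hinj : Function.Injective w
  · exact ⟨.inl ⟨w, hinj⟩, rfl⟩
  · -- the finset of "repeat" positions
    classical
    have hne : ∃ j : Fin n, ∃ i : Fin n, i < j ∧ w i = w j := by
      rw [Function.not_injective_iff] at hinj
      obtain ⟨a, b, hab, hne⟩ := hinj
      rcases lt_or_gt_of_ne hne with h | h
      · exact ⟨b, a, h, hab⟩
      · exact ⟨a, b, h, hab.symm⟩
    set S : Finset (Fin n) := Finset.univ.filter (fun j => ∃ i : Fin n, i < j ∧ w i = w j)
      with hS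
    have hSne : S.Nonempty := by
      obtain ⟨j, hj⟩ := hne
      exact ⟨j, by simp [hS, hj]⟩
    set j0 : Fin n := S.min' hSne with hj0
    have hj0mem : j0 ∈ S := S.min'_mem hSne
    obtain ⟨i0, hi0lt, hi0eq⟩ : ∃ i : Fin n, i < j0 ∧ w i = w j0 := by
      simpa [hS] using hj0mem
    have hmin : ∀ j : Fin n, j < j0 → ¬ ∃ i : Fin n, i < j ∧ w i = w j := by
      intro j hj hex
      have : j0 ≤ j := S.min'_le j (by simp [hS, hex])
      exact absurd hj (not_lt.mpr this)
    -- constancy of the tail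
    have tail : ∀ d : ℕ, ∀ hd : (j0 : ℕ) + d < n, w ⟨(j0 : ℕ) + d, hd⟩ = w j0 := by
      intro d
      induction d with
      | zero => intro hd; exact congrArg w (Fin.ext (by simp))
      | succ d ih =>
          intro hd
          have hd' : (j0 : ℕ) + d < n := by omega
          have h1 : w ⟨(j0:ℕ)+d, hd'⟩ = w j0 := ih hd'
          have h2 : w i0 = w ⟨(j0:ℕ)+d, hd'⟩ := hi0eq.trans h1.symm
          have hlt : i0 < (⟨(j0:ℕ)+d, hd'⟩ : Fin n) := by
            have : (i0 : ℕ) < (j0 : ℕ) := hi0lt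
            simp only [Fin.lt_def]; omega
          have h3 := hw i0 ⟨(j0:ℕ)+d, hd'⟩ ⟨(j0:ℕ)+d+1, by omega⟩ hlt (by simp) h2
          exact h3.trans h1
    have hj0pos : 1 ≤ (j0 : ℕ) := by
      by_contra h
      have : (i0 : ℕ) < (j0 : ℕ) := hi0lt
      omega
    have hj0n : (j0 : ℕ) < n := j0.isLt
    set k : Fin (n - 1) := ⟨(j0 : ℕ) - 1, by omega⟩ with hk
    have hk1 : (k : ℕ) + 1 = (j0 : ℕ) := by simp [hk]; omega
    -- the prefix embedding
    have hmin2 : ∀ (j i : Fin n), j < j0 → i < j → w i ≠ w j :=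
      fun j i hj hi he => hmin j hj ⟨i, hi, he⟩
    have hprefinj : ∀ p q : Fin ((k:ℕ)+1), w ⟨p, by have := p.isLt; omega⟩ = w ⟨q, by have := q.isLt; omega⟩ → p = q := by
      intro p q hpq
      by_contra hne
      have hpq' : (p : ℕ) ≠ (q : ℕ) := fun h => hne (Fin.ext h)
      rcases Nat.lt_or_ge (p : ℕ) (q : ℕ) with h | h
      · have hq : (q : ℕ) < (j0 : ℕ) := by have := q.isLt; omega
        exact hmin2 ⟨q, by omega⟩ ⟨p, by omega⟩
          (by rw [Fin.lt_def]; exact hq) (by rw [Fin.lt_def]; exact h) hpq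
      · have h' : (q : ℕ) < (p : ℕ) := by omega
        have hp : (p : ℕ) < (j0 : ℕ) := by have := p.isLt; omega
        exact hmin2 ⟨p, by omega⟩ ⟨q, by omega⟩
          (by rw [Fin.lt_def]; exact hp) (by rw [Fin.lt_def]; exact h') hpq.symm
    refine ⟨.inr ⟨k, ⟨fun p => w ⟨p, by have := p.isLt; have := k.isLt; omega⟩,
      fun p q h => hprefinj p q h⟩, ⟨(i0 : ℕ), by omega⟩⟩, ?_⟩
    funext p
    simp only [toWord, Function.Embedding.coeFn_mk]
    split_ifs with h
    · congr 1
    · -- p ≥ j0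
      have hp : (j0 : ℕ) ≤ (p : ℕ) := by omega
      have : w i0 = w j0 := hi0eq
      have e : w ⟨(i0 : ℕ), by have := i0.isLt; omega⟩ = w i0 := by congr 1
      change w ⟨(i0 : ℕ), by have := i0.isLt; omega⟩ = w p
      rw [e, hi0eq]
      have := tail ((p : ℕ) - (j0 : ℕ)) (by have := p.isLt; omega)
      have ep : (⟨(j0:ℕ) + ((p:ℕ) - (j0:ℕ)), by have := p.isLt; omega⟩ : Fin n) = p :=
        Fin.ext (by simp; omega)
      rw [ep] at this
      exact this.symm

theorem count_words_112_221 (m n : ℕ) (hm : 1 ≤ m) (hn : 1 ≤ n) :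
    Nat.card {w : Fin n → Fin m // ¬ Contains112 w ∧ ¬ Contains221 w} =
      if n ≤ m then
        Nat.descFactorial m n + ∑ k ∈ Finset.Icc 1 (n - 1), k * Nat.descFactorial m k
      else
        ∑ k ∈ Finset.Icc 1 m, k * Nat.descFactorial m k := by
  classical
  have hbij : Function.Bijective
      (fun d : Dom n m => (⟨toWord d, (good_iff _).mpr (toWord_good d)⟩ :
        {w : Fin n → Fin m // ¬ Contains112 w ∧ ¬ Contains221 w})) := by
    constructor
    · intro a b hab
      exact toWord_injective (congrArg Subtype.val hab)
    · rintro ⟨w, hw⟩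
      obtain ⟨d, hd⟩ := toWord_surjective hn w ((good_iff w).mp hw)
      exact ⟨d, Subtype.ext hd⟩
  have hcard := Nat.card_eq_of_bijective _ hbij
  rw [← hcard, Nat.card_eq_fintype_card]
  have hDom : Fintype.card (Dom n m)
      = Nat.descFactorial m n + ∑ k ∈ Finset.Icc 1 (n - 1), k * Nat.descFactorial m k := by
    rw [Fintype.card_sum, Fintype.card_sigma]
    simp only [Fintype.card_prod, Fintype.card_embedding_eq, Fintype.card_fin]
    congr 1
    rw [Fin.sum_univ_eq_sum_range (fun k => Nat.descFactorial m (k+1) * (k+1))]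
    have hIcc : Finset.Icc 1 (n-1) = Finset.Ico 1 n := by
      rw [← Finset.Ico_add_one_right_eq_Icc]
      congr 1
      omega
    rw [hIcc, Finset.sum_Ico_eq_sum_range]
    refine Finset.sum_congr rfl fun k _ => ?_
    rw [Nat.add_comm 1 k, Nat.mul_comm]
  rw [hDom]
  split_ifs with h
  · rfl
  · push_neg at h
    have h0 : Nat.descFactorial m n = 0 := by
      rw [Nat.descFactorial_eq_zero_iff_lt]; exact h
    rw [h0, zero_add]
    refine (Finset.sum_subset ?_ ?_).symm
    · intro k hk
      simp only [Finset.mem_Icc] at hk ⊢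
      omega
    · intro k hk hk'
      simp only [Finset.mem_Icc] at hk hk'
      have : m < k := by omega
      rw [Nat.descFactorial_eq_zero_iff_lt.mpr this, Nat.mul_zero]
end

section
/- For a fixed alphabet size m, the number of words of length n over {1,...,m} avoiding both patterns 1-12 and 2-21 is the same for all n > m; that is, for all n, n' > m the counts for length n and length n' agree. -/
/-- Extend a word of length `n+1` by repeating its last letter. -/
def extw {n m : ℕ} (w : Fin (n+1) → Fin m) : Fin (n+2) → Fin m :=
  fun k => w ⟨min (k : ℕ) n, by omega⟩

/-- Restrict a word of length `n+2` to its first `n+1` letters. -/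
def resw {n m : ℕ} (v : Fin (n+2) → Fin m) : Fin (n+1) → Fin m :=
  fun i => v ⟨(i : ℕ), by omega⟩

lemma extw_apply_lt {n m : ℕ} (w : Fin (n+1) → Fin m) (k : Fin (n+2))
    (hk : (k : ℕ) < n + 1) : extw w k = w ⟨(k : ℕ), hk⟩ := by
  unfold extw; congr 1; exact Fin.ext (by simp; omega)

lemma extw_apply_last {n m : ℕ} (w : Fin (n+1) → Fin m) (k : Fin (n+2))
    (hk : (k : ℕ) = n + 1) : extw w k = w ⟨n, n.lt_succ_self⟩ := by
  unfold extw; congr 1; exact Fin.ext (by simp; omega)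

lemma res_ext {n m : ℕ} (w : Fin (n+1) → Fin m) : resw (extw w) = w := by
  funext i
  show extw w ⟨(i : ℕ), _⟩ = w i
  rw [extw_apply_lt w _ (by exact i.isLt)]

lemma ext_res {n m : ℕ} (v : Fin (n+2) → Fin m)
    (h : v ⟨n+1, by omega⟩ = v ⟨n, by omega⟩) : extw (resw v) = v := by
  funext k
  rcases Nat.lt_or_ge (k : ℕ) (n+1) with hk | hk
  · rw [extw_apply_lt _ _ hk]
    exact congrArg v (Fin.ext rfl)
  · have hk' : (k : ℕ) = n + 1 := by omega
    rw [extw_apply_last _ _ hk']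
    show v ⟨n, _⟩ = v k
    rw [← h]
    congr 1
    exact Fin.ext hk'.symm

lemma res_avoid {n m : ℕ} (v : Fin (n+2) → Fin m)
    (hv : ¬ Contains112 v ∧ ¬ Contains221 v) :
    ¬ Contains112 (resw v) ∧ ¬ Contains221 (resw v) := by
  constructor
  · rintro ⟨i, j, k, hij, hjk, h1, h2⟩
    exact hv.1 ⟨⟨i, by omega⟩, ⟨j, by omega⟩, ⟨k, by omega⟩,
      Fin.mk_lt_mk.mpr hij, by simpa using hjk, h1, h2⟩
  · rintro ⟨i, j, k, hij, hjk, h1, h2⟩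
    exact hv.2 ⟨⟨i, by omega⟩, ⟨j, by omega⟩, ⟨k, by omega⟩,
      Fin.mk_lt_mk.mpr hij, by simpa using hjk, h1, h2⟩

lemma ext_avoid {n m : ℕ} (w : Fin (n+1) → Fin m)
    (hw : ¬ Contains112 w ∧ ¬ Contains221 w) :
    ¬ Contains112 (extw w) ∧ ¬ Contains221 (extw w) := by
  constructor
  · rintro ⟨i, j, k, hij, hjk, h1, h2⟩
    have hij' : (i : ℕ) < (j : ℕ) := hij
    have hjn : (j : ℕ) < n + 1 := by omega
    have hin : (i : ℕ) < n + 1 := by omega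
    rcases Nat.lt_or_ge (k : ℕ) (n+2-1) with hk | hk
    · rw [extw_apply_lt w i hin, extw_apply_lt w j hjn] at h1
      rw [extw_apply_lt w j hjn, extw_apply_lt w k hk] at h2
      exact hw.1 ⟨⟨i, hin⟩, ⟨j, hjn⟩, ⟨(k : ℕ), hk⟩, Fin.mk_lt_mk.mpr hij', by simpa using hjk,
        h1, h2⟩
    · have hk' : (k : ℕ) = n + 1 := by omega
      have hj' : (j : ℕ) = n := by omega
      rw [extw_apply_lt w j hjn, extw_apply_last w k hk'] at h2
      have : w ⟨(j : ℕ), hjn⟩ = w ⟨n, n.lt_succ_self⟩ := by congr 1; exact Fin.ext hj'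
      rw [this] at h2
      exact lt_irrefl _ h2
  · rintro ⟨i, j, k, hij, hjk, h1, h2⟩
    have hij' : (i : ℕ) < (j : ℕ) := hij
    have hjn : (j : ℕ) < n + 1 := by omega
    have hin : (i : ℕ) < n + 1 := by omega
    rcases Nat.lt_or_ge (k : ℕ) (n+2-1) with hk | hk
    · rw [extw_apply_lt w i hin, extw_apply_lt w j hjn] at h1
      rw [extw_apply_lt w j hjn] at h2
      rw [extw_apply_lt w k hk] at h2
      exact hw.2 ⟨⟨i, hin⟩, ⟨j, hjn⟩, ⟨(k : ℕ), hk⟩, Fin.mk_lt_mk.mpr hij', by simpa using hjk,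
        h1, h2⟩
    · have hk' : (k : ℕ) = n + 1 := by omega
      have hj' : (j : ℕ) = n := by omega
      rw [extw_apply_lt w j hjn, extw_apply_last w k hk'] at h2
      have : w ⟨(j : ℕ), hjn⟩ = w ⟨n, n.lt_succ_self⟩ := by congr 1; exact Fin.ext hj'
      rw [this] at h2
      exact lt_irrefl _ h2

lemma step_lemma_s11 {n m : ℕ} (v : Fin n → Fin m)
    (h : ¬ Contains112 v ∧ ¬ Contains221 v)
    (i j k : Fin n) (hij : i < j) (hjk : (j : ℕ) + 1 = (k : ℕ)) (he : v i = v j) :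
    v k = v j := by
  have h1 : ¬ v j < v k := fun hl => h.1 ⟨i, j, k, hij, hjk, he, hl⟩
  have h2 : ¬ v k < v j := fun hl => h.2 ⟨i, j, k, hij, hjk, he, hl⟩
  exact le_antisymm (not_lt.1 h1) (not_lt.1 h2)

lemma chain_lemma {n m : ℕ} (v : Fin n → Fin m)
    (h : ¬ Contains112 v ∧ ¬ Contains221 v)
    (i j : Fin n) (hij : i < j) (he : v i = v j) :
    ∀ l, (j : ℕ) ≤ l → ∀ hl : l < n, v ⟨l, hl⟩ = v j := by
  intro l
  induction l with
  | zero =>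
    intro hjl hl
    have hj0 : (j : ℕ) = 0 := by omega
    congr 1
    exact Fin.ext hj0.symm
  | succ l ih =>
    intro hjl hl
    rcases Nat.lt_or_ge l (j : ℕ) with hc | hc
    · have : (j : ℕ) = l + 1 := by omega
      congr 1
      exact Fin.ext this.symm
    · have hl' : l < n := by omega
      have ihl := ih hc hl'
      have hii : i < (⟨l, hl'⟩ : Fin n) := by
        have : (i : ℕ) < (j : ℕ) := hij
        exact Fin.mk_lt_mk.mpr (by omega) |>.trans_le (le_refl _) |>.trans_le (le_refl _)
      have hstep := step_lemma_s11 v h i ⟨l, hl'⟩ ⟨l+1, hl⟩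
        (by show (i : ℕ) < l; have : (i : ℕ) < (j : ℕ) := hij; omega) rfl
        (he.trans ihl.symm)
      rw [hstep, ihl]

lemma last_eq {n m : ℕ} (hm : m ≤ n) (v : Fin (n+2) → Fin m)
    (h : ¬ Contains112 v ∧ ¬ Contains221 v) :
    v ⟨n+1, by omega⟩ = v ⟨n, by omega⟩ := by
  have hninj : ¬ Function.Injective (fun i : Fin (m+1) => v ⟨(i : ℕ), by omega⟩) := by
    intro hinj
    have := Fintype.card_le_of_injective _ hinj
    simp at this
  rw [Function.not_injective_iff] at hninj
  obtain ⟨a, b, hab, hne⟩ := hninj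
  -- WLOG a < b
  rcases lt_or_gt_of_ne hne with hlt | hlt
  · have c1 := chain_lemma v h ⟨(a : ℕ), by omega⟩ ⟨(b : ℕ), by omega⟩
      (Fin.mk_lt_mk.mpr hlt) hab (n+1) (by simp; omega) (by omega)
    have c2 := chain_lemma v h ⟨(a : ℕ), by omega⟩ ⟨(b : ℕ), by omega⟩
      (Fin.mk_lt_mk.mpr hlt) hab n (by simp; have := b.isLt; omega) (by omega)
    exact c1.trans c2.symm
  · have c1 := chain_lemma v h ⟨(b : ℕ), by omega⟩ ⟨(a : ℕ), by omega⟩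
      (Fin.mk_lt_mk.mpr hlt) hab.symm (n+1) (by simp; omega) (by omega)
    have c2 := chain_lemma v h ⟨(b : ℕ), by omega⟩ ⟨(a : ℕ), by omega⟩
      (Fin.mk_lt_mk.mpr hlt) hab.symm n (by simp; have := a.isLt; omega) (by omega)
    exact c1.trans c2.symm

lemma card_succ_eq {m n : ℕ} (hm : m ≤ n) :
    Nat.card {w : Fin (n+2) → Fin m // ¬ Contains112 w ∧ ¬ Contains221 w} =
      Nat.card {w : Fin (n+1) → Fin m // ¬ Contains112 w ∧ ¬ Contains221 w} := by
  apply Nat.card_congr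
  exact
    { toFun := fun v => ⟨resw v.1, res_avoid v.1 v.2⟩
      invFun := fun w => ⟨extw w.1, ext_avoid w.1 w.2⟩
      left_inv := fun v => Subtype.ext (ext_res v.1 (last_eq hm v.1 v.2))
      right_inv := fun w => Subtype.ext (res_ext w.1) }

theorem count_words_112_221_eventually_constant (m : ℕ) :
    ∀ n n' : ℕ, m < n → m < n' →
      Nat.card {w : Fin n → Fin m // ¬ Contains112 w ∧ ¬ Contains221 w} =
        Nat.card {w : Fin n' → Fin m // ¬ Contains112 w ∧ ¬ Contains221 w} := by
  have key : ∀ n : ℕ, m < n →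
      Nat.card {w : Fin n → Fin m // ¬ Contains112 w ∧ ¬ Contains221 w} =
        Nat.card {w : Fin (m+1) → Fin m // ¬ Contains112 w ∧ ¬ Contains221 w} := by
    intro n hn
    induction n with
    | zero => omega
    | succ k ih =>
      rcases Nat.lt_or_ge m k with hk | hk
      · -- k > m, so k = k'+1 with k' ≥ m
        obtain ⟨k', rfl⟩ : ∃ k', k = k' + 1 := ⟨k - 1, by omega⟩
        rw [card_succ_eq (by omega : m ≤ k')]
        exact ih (by omega)
      · have : k = m := by omega
        subst this
        rfl
  intro n n' hn hn'
  rw [key n hn, key n' hn']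
end

section
/- For integers 1 ≤ k ≤ n, the number of words of length n over {1,...,k} that use every letter of {1,...,k} and avoid both patterns 1-21 and 2-12 equals k·(n-1)_{k-1}, where (n-1)_{k-1} = (n-1)(n-2)···(n-k+1) is the falling factorial. Equivalently, this count equals k!·C(n-1,k-1). -/
namespace CW

variable {n k : ℕ}

/-- number of elements of `S` (cut set) strictly below `i`. -/
def cnt (S : Finset (Fin (n-1))) (i : ℕ) : ℕ := (S.filter (fun s : Fin (n-1) => (s:ℕ) < i)).card

lemma cnt_zero (S : Finset (Fin (n-1))) : cnt S 0 = 0 := by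
  simp [cnt]

lemma cnt_mono (S : Finset (Fin (n-1))) {i j : ℕ} (h : i ≤ j) : cnt S i ≤ cnt S j := by
  apply Finset.card_le_card
  intro s hs
  simp only [Finset.mem_filter] at *
  exact ⟨hs.1, lt_of_lt_of_le hs.2 h⟩

lemma cnt_le_card (S : Finset (Fin (n-1))) (i : ℕ) : cnt S i ≤ S.card :=
  Finset.card_le_card (Finset.filter_subset _ _)

lemma cnt_full (S : Finset (Fin (n-1))) {i : ℕ} (h : n - 1 ≤ i) : cnt S i = S.card := by
  unfold cnt
  congr 1
  apply Finset.filter_true_of_mem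
  intro s _
  exact lt_of_lt_of_le s.isLt h

lemma cnt_succ_of_mem (S : Finset (Fin (n-1))) {i : ℕ} (h : i < n - 1)
    (hm : (⟨i, h⟩ : Fin (n-1)) ∈ S) : cnt S (i+1) = cnt S i + 1 := by
  unfold cnt
  have : S.filter (fun s : Fin (n-1) => (s:ℕ) < i + 1)
      = insert (⟨i, h⟩ : Fin (n-1)) (S.filter (fun s : Fin (n-1) => (s:ℕ) < i)) := by
    ext s
    simp only [Finset.mem_filter, Finset.mem_insert]
    constructor
    · rintro ⟨hs, hlt⟩
      rcases Nat.lt_succ_iff_lt_or_eq.mp hlt with h' | h'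
      · exact Or.inr ⟨hs, h'⟩
      · left; exact Fin.ext h'
    · rintro (rfl | ⟨hs, hlt⟩)
      · exact ⟨hm, Nat.lt_succ_self _⟩
      · exact ⟨hs, Nat.lt_succ_of_lt hlt⟩
  rw [this, Finset.card_insert_of_notMem]
  simp

lemma cnt_succ_of_not_mem (S : Finset (Fin (n-1))) {i : ℕ}
    (h : ∀ (h : i < n - 1), (⟨i, h⟩ : Fin (n-1)) ∉ S) : cnt S (i+1) = cnt S i := by
  unfold cnt
  congr 1
  ext s
  simp only [Finset.mem_filter]
  constructor
  · rintro ⟨hs, hlt⟩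
    refine ⟨hs, ?_⟩
    rcases Nat.lt_succ_iff_lt_or_eq.mp hlt with h' | h'
    · exact h'
    · exfalso
      have hi : i < n - 1 := h' ▸ s.isLt
      exact h hi (by
        have : s = (⟨i, hi⟩ : Fin (n-1)) := Fin.ext h'
        rwa [← this])
  · rintro ⟨hs, hlt⟩
    exact ⟨hs, Nat.lt_succ_of_lt hlt⟩

lemma mem_of_cnt_succ_ne (S : Finset (Fin (n-1))) {i : ℕ}
    (h : cnt S (i+1) ≠ cnt S i) : ∃ (h' : i < n - 1), (⟨i, h'⟩ : Fin (n-1)) ∈ S := by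
  by_contra hc
  push_neg at hc
  exact h (cnt_succ_of_not_mem S hc)

lemma cnt_succ_le (S : Finset (Fin (n-1))) (i : ℕ) : cnt S (i+1) ≤ cnt S i + 1 := by
  rcases Nat.lt_or_ge i (n-1) with h | h
  · by_cases hm : (⟨i, h⟩ : Fin (n-1)) ∈ S
    · rw [cnt_succ_of_mem S h hm]
    · rw [cnt_succ_of_not_mem S (fun _ => hm)]; omega
  · rw [cnt_succ_of_not_mem S (fun h' => absurd h' (not_lt.mpr h))]; omega

lemma exists_cnt_eq (S : Finset (Fin (n-1))) (hn : 0 < n) {m : ℕ} (hm : m ≤ S.card) :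
    ∃ i : Fin n, cnt S (i : ℕ) = m := by
  have hP : cnt S (n-1) = S.card := cnt_full S le_rfl
  have hex : ∃ i, m ≤ cnt S i := ⟨n-1, by omega⟩
  classical
  have hi₀ : m ≤ cnt S (Nat.find hex) := Nat.find_spec hex
  have hle : Nat.find hex ≤ n - 1 := Nat.find_min' hex (by omega)
  have heq : cnt S (Nat.find hex) = m := by
    rcases Nat.eq_zero_or_pos (Nat.find hex) with h0 | h0
    · have := cnt_zero S
      rw [h0] at hi₀ ⊢
      omega
    · obtain ⟨t, ht⟩ := Nat.exists_eq_succ_of_ne_zero (Nat.pos_iff_ne_zero.mp h0)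
      have hnt : ¬ m ≤ cnt S t := Nat.find_min hex (by omega)
      have := cnt_succ_le S t
      rw [ht, Nat.succ_eq_add_one] at hi₀ ⊢
      omega
  exact ⟨⟨Nat.find hex, by omega⟩, heq⟩



/-- the avoidance condition as a rewriting rule -/
def Rule (w : Fin n → Fin k) : Prop :=
  ∀ i j l : Fin n, i < j → (j:ℕ) + 1 = (l:ℕ) → w i = w l → w j = w i

/-- the word attached to a permutation and a cut set -/
def W (hk : 1 ≤ k) (σ : Equiv.Perm (Fin k)) (S : Finset (Fin (n-1)))
    (hS : S.card = k - 1) : Fin n → Fin k :=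
  fun i => σ ⟨cnt S i.val, by have := cnt_le_card S i.val; omega⟩

lemma W_rule (hk : 1 ≤ k) (σ : Equiv.Perm (Fin k)) (S : Finset (Fin (n-1)))
    (hS : S.card = k - 1) : Rule (W hk σ S hS) := by
  intro i j l hij hjl heq
  unfold W at *
  have h1 : cnt S i.val = cnt S l.val := congrArg Fin.val (σ.injective heq)
  have h2 : cnt S j.val = cnt S i.val := by
    have m1 : cnt S i.val ≤ cnt S j.val := cnt_mono S (le_of_lt hij)
    have m2 : cnt S j.val ≤ cnt S l.val := cnt_mono S (by omega)
    omega
  congr 1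
  exact Fin.ext h2

lemma W_surj (hk : 1 ≤ k) (hn : 0 < n) (σ : Equiv.Perm (Fin k)) (S : Finset (Fin (n-1)))
    (hS : S.card = k - 1) : Function.Surjective (W hk σ S hS) := by
  intro c
  have hm : (σ.symm c).val ≤ S.card := by have := (σ.symm c).isLt; omega
  obtain ⟨i, hi⟩ := exists_cnt_eq S hn hm
  refine ⟨i, ?_⟩
  unfold W
  have : (⟨cnt S i.val, by have := cnt_le_card S i.val; omega⟩ : Fin k) = σ.symm c :=
    Fin.ext hi
  rw [this, Equiv.apply_symm_apply]

/-- the descent (cut) set of a word -/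
def DS (w : Fin n → Fin k) : Finset (Fin (n-1)) :=
  Finset.univ.filter (fun i : Fin (n-1) =>
    w ⟨i.val, by have := i.isLt; omega⟩ ≠ w ⟨i.val + 1, by have := i.isLt; omega⟩)

lemma mem_DS {w : Fin n → Fin k} {i : Fin (n-1)} :
    i ∈ DS w ↔ w ⟨i.val, by have := i.isLt; omega⟩ ≠ w ⟨i.val + 1, by have := i.isLt; omega⟩ := by
  simp [DS]

lemma DS_W (hk : 1 ≤ k) (σ : Equiv.Perm (Fin k)) (S : Finset (Fin (n-1)))
    (hS : S.card = k - 1) : DS (W hk σ S hS) = S := by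
  ext i
  rw [mem_DS]
  unfold W
  constructor
  · intro h
    have hne : cnt S (i.val + 1) ≠ cnt S i.val := by
      intro he
      exact h (by congr 1; exact Fin.ext he.symm)
    obtain ⟨h', hm⟩ := mem_of_cnt_succ_ne S hne
    have : (⟨i.val, h'⟩ : Fin (n-1)) = i := Fin.ext rfl
    rwa [this] at hm
  · intro hm h
    have he : cnt S (i.val + 1) = cnt S i.val + 1 :=
      cnt_succ_of_mem S i.isLt (by rwa [show (⟨i.val, i.isLt⟩ : Fin (n-1)) = i from Fin.ext rfl])
    have : cnt S ((⟨i.val, by have := i.isLt; omega⟩ : Fin n) : ℕ)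
        = cnt S ((⟨i.val + 1, by have := i.isLt; omega⟩ : Fin n) : ℕ) :=
      congrArg Fin.val (σ.injective h)
    simp only [Fin.val_mk] at this
    omega

lemma interval {w : Fin n → Fin k} (hr : Rule w) :
    ∀ d : ℕ, ∀ a b c : Fin n, (b:ℕ) - (a:ℕ) ≤ d → a ≤ c → c ≤ b → w a = w b → w c = w a := by
  intro d
  induction d with
  | zero =>
    intro a b c hd hac hcb hab
    have : c = a := Fin.le_antisymm (by exact Fin.le_def.mpr (by have := Fin.le_def.mp hac; have := Fin.le_def.mp hcb; omega)) hac
    rw [this]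
  | succ d ih =>
    intro a b c hd hac hcb hab
    by_cases hcb' : c = b
    · rw [hcb', hab]
    have hclt : (c:ℕ) < (b:ℕ) := lt_of_le_of_ne (Fin.le_def.mp hcb) (fun h => hcb' (Fin.ext h))
    have halt : (a:ℕ) < (b:ℕ) := lt_of_le_of_lt (Fin.le_def.mp hac) hclt
    by_cases hab' : (a:ℕ) = (b:ℕ) - 1
    · have : c = a := Fin.ext (by have := Fin.le_def.mp hac; omega)
      rw [this]
    · have hb1 : (b:ℕ) - 1 < n := by have := b.isLt; omega
      set b' : Fin n := ⟨(b:ℕ) - 1, hb1⟩ with hb'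
      have h1 : a < b' := Fin.lt_def.mpr (by simp [hb']; omega)
      have h2 : (b':ℕ) + 1 = (b:ℕ) := by simp [hb']; omega
      have hwb' : w b' = w a := hr a b' b h1 h2 hab
      exact ih a b' c (by simp [hb']; omega) hac (Fin.le_def.mpr (by simp [hb']; omega)) hwb'.symm

lemma interval' {w : Fin n → Fin k} (hr : Rule w) {a c b : Fin n}
    (h1 : a ≤ c) (h2 : c ≤ b) (hab : w a = w b) : w c = w a :=
  interval hr ((b:ℕ) - (a:ℕ)) a b c le_rfl h1 h2 hab

lemma w_eq_of_cnt_eq {w : Fin n → Fin k} :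
    ∀ d : ℕ, ∀ i j : Fin n, (j:ℕ) - (i:ℕ) ≤ d → i ≤ j →
      cnt (DS w) i.val = cnt (DS w) j.val → w i = w j := by
  intro d
  induction d with
  | zero =>
    intro i j hd hij _
    have : i = j := Fin.le_antisymm hij (Fin.le_def.mpr (by have := Fin.le_def.mp hij; omega))
    rw [this]
  | succ d ih =>
    intro i j hd hij hc
    by_cases hij' : i = j
    · rw [hij']
    have hlt : (i:ℕ) < (j:ℕ) := lt_of_le_of_ne (Fin.le_def.mp hij) (fun h => hij' (Fin.ext h))
    have hin : (i:ℕ) < n - 1 := by have := j.isLt; omega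
    have hstep : cnt (DS w) (i.val + 1) = cnt (DS w) i.val := by
      have m1 := cnt_mono (DS w) (show i.val ≤ i.val + 1 by omega)
      have m2 := cnt_mono (DS w) (show i.val + 1 ≤ j.val by omega)
      omega
    have hnm : (⟨i.val, hin⟩ : Fin (n-1)) ∉ DS w := by
      intro hm
      have := cnt_succ_of_mem (DS w) hin hm
      omega
    rw [mem_DS, not_not] at hnm
    have hstep2 : w i = w ⟨i.val + 1, by have := j.isLt; omega⟩ := hnm
    rw [hstep2]
    exact ih ⟨i.val + 1, by have := j.isLt; omega⟩ j (by simp; omega)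
      (Fin.le_def.mpr (by simp; omega)) (hstep.trans hc)

lemma cnt_eq_of_w_eq {w : Fin n → Fin k} (hr : Rule w) :
    ∀ d : ℕ, ∀ i j : Fin n, (j:ℕ) - (i:ℕ) ≤ d → i ≤ j →
      w i = w j → cnt (DS w) i.val = cnt (DS w) j.val := by
  intro d
  induction d with
  | zero =>
    intro i j hd hij _
    have : i = j := Fin.le_antisymm hij (Fin.le_def.mpr (by have := Fin.le_def.mp hij; omega))
    rw [this]
  | succ d ih =>
    intro i j hd hij hw
    by_cases hij' : i = j
    · rw [hij']
    have hlt : (i:ℕ) < (j:ℕ) := lt_of_le_of_ne (Fin.le_def.mp hij) (fun h => hij' (Fin.ext h))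
    have hin : (i:ℕ) < n - 1 := by have := j.isLt; omega
    set i1 : Fin n := ⟨i.val + 1, by have := j.isLt; omega⟩ with hi1
    have hwi1 : w i1 = w i :=
      interval' hr (Fin.le_def.mpr (by simp [hi1])) (Fin.le_def.mpr (by simp [hi1]; omega)) hw
    have hnm : (⟨i.val, hin⟩ : Fin (n-1)) ∉ DS w := by
      rw [mem_DS, not_not]
      exact hwi1.symm
    have hstep : cnt (DS w) (i.val + 1) = cnt (DS w) i.val :=
      cnt_succ_of_not_mem (DS w) (fun h' => by
        have : (⟨i.val, h'⟩ : Fin (n-1)) = ⟨i.val, hin⟩ := Fin.ext rfl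
        rw [this]; exact hnm)
    have := ih i1 j (by simp [hi1]; omega) (Fin.le_def.mpr (by simp [hi1]; omega))
      (hwi1.trans hw)
    simp only [hi1] at this
    omega



lemma not_contains_iff (w : Fin n → Fin k) :
    (¬ Contains121 w ∧ ¬ Contains212 w) ↔ Rule w := by
  constructor
  · rintro ⟨h1, h2⟩ i j l hij hjl heq
    rcases lt_trichotomy (w i) (w j) with h | h | h
    · exact absurd ⟨i, j, l, hij, hjl, heq, h⟩ h1
    · exact h.symm
    · exact absurd ⟨i, j, l, hij, hjl, heq, h⟩ h2
  · intro hr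
    constructor
    · rintro ⟨i, j, l, hij, hjl, heq, hlt⟩
      have h := hr i j l hij hjl heq
      rw [h] at hlt
      exact lt_irrefl _ hlt
    · rintro ⟨i, j, l, hij, hjl, heq, hlt⟩
      have h := hr i j l hij hjl heq
      rw [h] at hlt
      exact lt_irrefl _ hlt

def F (hk : 1 ≤ k) (hkn : k ≤ n)
    (p : Equiv.Perm (Fin k) × {S : Finset (Fin (n-1)) // S.card = k - 1}) :
    {w : Fin n → Fin k // Function.Surjective w ∧ ¬ Contains121 w ∧ ¬ Contains212 w} :=
  ⟨W hk p.1 p.2.1 p.2.2,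
   W_surj hk (by omega) p.1 p.2.1 p.2.2,
   (not_contains_iff _).mpr (W_rule hk p.1 p.2.1 p.2.2)⟩

lemma F_inj (hk : 1 ≤ k) (hkn : k ≤ n) : Function.Injective (F hk hkn) := by
  rintro ⟨σ, S, hS⟩ ⟨σ', S', hS'⟩ h
  have hw : W hk σ S hS = W hk σ' S' hS' := congrArg Subtype.val h
  have hSS : S = S' := by rw [← DS_W hk σ S hS, ← DS_W hk σ' S' hS', hw]
  subst hSS
  have hσ : σ = σ' := by
    apply Equiv.ext
    intro m
    have hm : m.val ≤ S.card := by have := m.isLt; omega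
    obtain ⟨i, hi⟩ := exists_cnt_eq S (by omega) hm
    have hfi := congrFun hw i
    unfold W at hfi
    calc σ m = σ ⟨cnt S i.val, by have := cnt_le_card S i.val; omega⟩ :=
          congrArg σ (Fin.ext hi.symm)
      _ = σ' ⟨cnt S i.val, by have := cnt_le_card S i.val; omega⟩ := hfi
      _ = σ' m := congrArg σ' (Fin.ext hi)
  rw [hσ]

lemma F_surj (hk : 1 ≤ k) (hkn : k ≤ n) : Function.Surjective (F hk hkn) := by
  rintro ⟨w, hsurj, hav⟩
  have hr : Rule w := (not_contains_iff w).mp hav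
  have hn : 0 < n := by omega
  have we : ∀ i j : Fin n, cnt (DS w) i.val = cnt (DS w) j.val → w i = w j := by
    intro i j h
    rcases le_total i j with hle | hle
    · exact w_eq_of_cnt_eq (j.val - i.val) i j le_rfl hle h
    · exact (w_eq_of_cnt_eq (i.val - j.val) j i le_rfl hle h.symm).symm
  have ce : ∀ i j : Fin n, w i = w j → cnt (DS w) i.val = cnt (DS w) j.val := by
    intro i j h
    rcases le_total i j with hle | hle
    · exact cnt_eq_of_w_eq hr (j.val - i.val) i j le_rfl hle h
    · exact (cnt_eq_of_w_eq hr (i.val - j.val) j i le_rfl hle h.symm).symm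
  classical
  have hcard : (DS w).card + 1 = k := by
    have hvs : ∀ m : Fin ((DS w).card + 1),
        cnt (DS w) ((exists_cnt_eq (DS w) hn (Nat.lt_succ_iff.mp m.isLt)).choose).val = m.val :=
      fun m => (exists_cnt_eq (DS w) hn (Nat.lt_succ_iff.mp m.isLt)).choose_spec
    have hbij : Function.Bijective
        (fun m : Fin ((DS w).card + 1) =>
          w (exists_cnt_eq (DS w) hn (Nat.lt_succ_iff.mp m.isLt)).choose) := by
      constructor
      · intro m m' h
        apply Fin.ext
        rw [← hvs m, ← hvs m']
        exact ce _ _ h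
      · intro c
        obtain ⟨i, hi⟩ := hsurj c
        refine ⟨⟨cnt (DS w) i.val, Nat.lt_succ_of_le (cnt_le_card (DS w) i.val)⟩, ?_⟩
        refine (we _ _ ?_).trans hi
        exact hvs ⟨cnt (DS w) i.val, Nat.lt_succ_of_le (cnt_le_card (DS w) i.val)⟩
    have := Fintype.card_of_bijective hbij
    simpa using this
  have hval : ∀ m : Fin k, m.val ≤ (DS w).card := fun m => by have := m.isLt; omega
  have hσs : ∀ m : Fin k,
      cnt (DS w) ((exists_cnt_eq (DS w) hn (hval m)).choose).val = m.val :=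
    fun m => (exists_cnt_eq (DS w) hn (hval m)).choose_spec
  have hbij : Function.Bijective
      (fun m : Fin k => w (exists_cnt_eq (DS w) hn (hval m)).choose) := by
    constructor
    · intro m m' h
      apply Fin.ext
      rw [← hσs m, ← hσs m']
      exact ce _ _ h
    · intro c
      obtain ⟨i, hi⟩ := hsurj c
      refine ⟨⟨cnt (DS w) i.val, by have := cnt_le_card (DS w) i.val; omega⟩, ?_⟩
      refine (we _ _ ?_).trans hi
      exact hσs ⟨cnt (DS w) i.val, by have := cnt_le_card (DS w) i.val; omega⟩
  refine ⟨⟨Equiv.ofBijective _ hbij, ⟨DS w, by omega⟩⟩, ?_⟩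
  apply Subtype.ext
  funext i
  show w (exists_cnt_eq (DS w) hn (hval ⟨cnt (DS w) i.val, _⟩)).choose = w i
  refine we _ _ ?_
  exact hσs ⟨cnt (DS w) i.val, by have := cnt_le_card (DS w) i.val; omega⟩

end CW

theorem count_reduced_words_121_212 (n k : ℕ) (hk : 1 ≤ k) (hkn : k ≤ n) :
    Nat.card {w : Fin n → Fin k //
        Function.Surjective w ∧ ¬ Contains121 w ∧ ¬ Contains212 w} =
      k * Nat.descFactorial (n - 1) (k - 1) ∧
    Nat.card {w : Fin n → Fin k //
        Function.Surjective w ∧ ¬ Contains121 w ∧ ¬ Contains212 w} =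
      Nat.factorial k * Nat.choose (n - 1) (k - 1) := by
  classical
  have h2 : Nat.card {w : Fin n → Fin k //
        Function.Surjective w ∧ ¬ Contains121 w ∧ ¬ Contains212 w} =
      Nat.factorial k * Nat.choose (n - 1) (k - 1) := by
    have hb : Function.Bijective (CW.F hk hkn) := ⟨CW.F_inj hk hkn, CW.F_surj hk hkn⟩
    rw [← Nat.card_eq_of_bijective _ hb, Nat.card_prod,
      Nat.card_eq_fintype_card, Nat.card_eq_fintype_card,
      Fintype.card_perm, Fintype.card_fin,
      Fintype.card_finset_len, Fintype.card_fin]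
  refine ⟨?_, h2⟩
  rw [h2, Nat.descFactorial_eq_factorial_mul_choose, ← Nat.mul_assoc,
    Nat.mul_factorial_pred (Nat.one_le_iff_ne_zero.mp hk)]
end

section
/- For integers m, n ≥ 1, the number of words of length n over {1,...,m} avoiding both patterns 1-21 and 2-12 equals Σ_{k=1}^{min(n,m)} C(m,k)·k·(n-1)_{k-1}. -/
namespace Words121

open Finset Function

variable {n m : ℕ}

/-- Number of elements of `s` (change positions) strictly below `j`. -/
def cnt (s : Finset (Fin (n-1))) (j : ℕ) : ℕ :=
  (s.filter (fun i => i.val < j)).card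

lemma cnt_mono (s : Finset (Fin (n-1))) {j j' : ℕ} (h : j ≤ j') : cnt s j ≤ cnt s j' := by
  apply Finset.card_le_card
  intro i hi
  simp only [Finset.mem_filter] at hi ⊢
  exact ⟨hi.1, lt_of_lt_of_le hi.2 h⟩

lemma cnt_le (s : Finset (Fin (n-1))) (j : ℕ) : cnt s j ≤ s.card :=
  Finset.card_filter_le _ _

lemma cnt_zero (s : Finset (Fin (n-1))) : cnt s 0 = 0 := by
  simp [cnt]

lemma cnt_split (s : Finset (Fin (n-1))) (j : ℕ) :
    cnt s (j+1) = cnt s j + (s.filter (fun i => i.val = j)).card := by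
  unfold cnt
  rw [← Finset.card_union_of_disjoint]
  · congr 1
    rw [← Finset.filter_or]
    apply Finset.filter_congr
    intro x _
    constructor
    · intro h; omega
    · intro h; omega
  · rw [Finset.disjoint_left]
    intro a ha hb
    simp only [Finset.mem_filter] at ha hb
    omega

lemma cnt_single_le (s : Finset (Fin (n-1))) (j : ℕ) :
    (s.filter (fun i => i.val = j)).card ≤ 1 := by
  apply Finset.card_le_one.mpr
  intro a ha b hb
  simp only [Finset.mem_filter] at ha hb
  exact Fin.ext (by omega)

lemma cnt_succ_le (s : Finset (Fin (n-1))) (j : ℕ) : cnt s (j+1) ≤ cnt s j + 1 := by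
  have := cnt_split s j
  have := cnt_single_le s j
  omega

lemma cnt_succ_mem (s : Finset (Fin (n-1))) {j : ℕ} (h : j < n - 1)
    (hm : (⟨j, h⟩ : Fin (n-1)) ∈ s) : cnt s (j+1) = cnt s j + 1 := by
  rw [cnt_split s j]
  congr 1
  rw [Finset.card_eq_one]
  refine ⟨⟨j, h⟩, ?_⟩
  ext a
  simp only [Finset.mem_filter, Finset.mem_singleton]
  constructor
  · rintro ⟨_, h2⟩; exact Fin.ext h2
  · rintro rfl; exact ⟨hm, rfl⟩

lemma cnt_succ_not_mem (s : Finset (Fin (n-1))) {j : ℕ} (h : j < n - 1)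
    (hm : (⟨j, h⟩ : Fin (n-1)) ∉ s) : cnt s (j+1) = cnt s j := by
  rw [cnt_split s j]
  have : (s.filter (fun i => i.val = j)) = ∅ := by
    rw [Finset.filter_eq_empty_iff]
    intro a ha hx
    exact hm (by rwa [show (⟨j, h⟩ : Fin (n-1)) = a from Fin.ext hx.symm])
  rw [this]
  simp

lemma cnt_full (s : Finset (Fin (n-1))) {j : ℕ} (h : n - 1 ≤ j) : cnt s j = s.card := by
  unfold cnt
  rw [Finset.filter_true_of_mem]
  intro i _
  exact lt_of_lt_of_le i.isLt h

lemma cnt_attain (hn : 0 < n) (s : Finset (Fin (n-1))) {b : ℕ} (hb : b ≤ s.card) :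
    ∃ j, j < n ∧ cnt s j = b := by
  have key : ∀ jv, jv < n → ∀ b ≤ cnt s jv, ∃ j, j < n ∧ cnt s j = b := by
    intro jv
    induction jv with
    | zero =>
      intro _ b hb
      rw [cnt_zero] at hb
      exact ⟨0, hn, by rw [cnt_zero]; omega⟩
    | succ jv ih =>
      intro hlt b hb
      by_cases hc : b ≤ cnt s jv
      · exact ih (by omega) b hc
      · have := cnt_succ_le s jv
        exact ⟨jv + 1, hlt, by omega⟩
  refine key (n-1) (by omega) b ?_
  rw [cnt_full s (le_refl _)]
  exact hb

/-- The word determined by change positions `s` and block values `f`. -/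
def wrd (s : Finset (Fin (n-1))) (f : Fin (s.card + 1) → Fin m) : Fin n → Fin m :=
  fun j => f ⟨cnt s (j : ℕ), Nat.lt_succ_of_le (cnt_le s (j : ℕ))⟩

/-- The avoidance condition, as a single positive statement. -/
def Avoids (w : Fin n → Fin m) : Prop :=
  ∀ i j k : Fin n, i < j → (j : ℕ) + 1 = (k : ℕ) → w i = w k → w i = w j

lemma avoids_iff (w : Fin n → Fin m) :
    (¬ Contains121 w ∧ ¬ Contains212 w) ↔ Avoids w := by
  constructor
  · rintro ⟨h1, h2⟩ i j k hij hjk he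
    by_contra hne
    rcases lt_or_gt_of_ne hne with h | h
    · exact h1 ⟨i, j, k, hij, hjk, he, h⟩
    · exact h2 ⟨i, j, k, hij, hjk, he, h⟩
  · intro hA
    constructor
    · rintro ⟨i, j, k, hij, hjk, he, hlt⟩
      exact absurd (hA i j k hij hjk he) (ne_of_lt hlt)
    · rintro ⟨i, j, k, hij, hjk, he, hlt⟩
      exact absurd (hA i j k hij hjk he) (ne_of_gt hlt)

/-- Contiguity: if the same value appears at `a` and `c`, every position between has it. -/
lemma ctg_aux {w : Fin n → Fin m} (hA : Avoids w) :
    ∀ cv : ℕ, ∀ a b c : Fin n, (c : ℕ) = cv → a ≤ b → b ≤ c → w a = w c → w b = w a := by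
  intro cv
  induction cv with
  | zero =>
    intro a b c hc hab hbc he
    have : a = b := Fin.ext (by
      have h1 := Fin.le_def.mp hab
      have h2 := Fin.le_def.mp hbc
      omega)
    rw [← this]
  | succ cv ih =>
    intro a b c hc hab hbc he
    by_cases hbceq : b = c
    · rw [hbceq]; exact he.symm
    have hbc' : (b : ℕ) ≤ cv := by
      have h2 := Fin.le_def.mp hbc
      have : (b : ℕ) ≠ (c : ℕ) := fun h => hbceq (Fin.ext h)
      omega
    have hcv : cv < n := by have := c.isLt; omega
    set c' : Fin n := ⟨cv, hcv⟩ with hc'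
    by_cases haeq : (a : ℕ) = cv
    · have : a = b := Fin.ext (by
        have h1 := Fin.le_def.mp hab
        omega)
      rw [← this]
    have hac' : a < c' := by
      rw [Fin.lt_def]
      have h1 := Fin.le_def.mp hab
      simp only [hc']
      omega
    have hwc' : w a = w c' := hA a c' c hac' (by simp [hc']; omega) he
    exact ih a b c' rfl hab (Fin.le_def.mpr (by simp [hc']; omega)) hwc'

lemma ctg {w : Fin n → Fin m} (hA : Avoids w) {a b c : Fin n}
    (hab : a ≤ b) (hbc : b ≤ c) (he : w a = w c) : w b = w a :=
  ctg_aux hA (c : ℕ) a b c rfl hab hbc he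

/-- The set of change positions of a word. -/
def chg (w : Fin n → Fin m) : Finset (Fin (n-1)) :=
  Finset.univ.filter (fun i =>
    w ⟨(i : ℕ), by have := i.isLt; omega⟩ ≠ w ⟨(i : ℕ) + 1, by have := i.isLt; omega⟩)

lemma wrd_avoids (s : Finset (Fin (n-1))) (f : Fin (s.card + 1) ↪ Fin m) :
    Avoids (wrd s ⇑f) := by
  intro i j k hij hjk he
  have hik : cnt s (i : ℕ) = cnt s (k : ℕ) := by
    have := f.injective he
    exact congrArg Fin.val this
  have h1 : cnt s (i : ℕ) ≤ cnt s (j : ℕ) := cnt_mono s (le_of_lt (Fin.lt_def.mp hij))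
  have h2 : cnt s (j : ℕ) ≤ cnt s (k : ℕ) := cnt_mono s (by omega)
  show f _ = f _
  congr 1
  exact Fin.ext (show cnt s (i : ℕ) = cnt s (j : ℕ) by omega)

/-- The bijection from (change set, block values) pairs to avoiding words. -/
def Phi (p : Σ s : Finset (Fin (n-1)), (Fin (s.card + 1) ↪ Fin m)) :
    {w : Fin n → Fin m // ¬ Contains121 w ∧ ¬ Contains212 w} :=
  ⟨wrd p.1 ⇑p.2, (avoids_iff _).mpr (wrd_avoids p.1 p.2)⟩

lemma mem_iff_ne (s : Finset (Fin (n-1))) (f : Fin (s.card + 1) ↪ Fin m) (i : Fin (n-1)) :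
    i ∈ s ↔ wrd s ⇑f ⟨(i : ℕ), by have := i.isLt; omega⟩ ≠
      wrd s ⇑f ⟨(i : ℕ) + 1, by have := i.isLt; omega⟩ := by
  constructor
  · intro him heq
    have h1 := cnt_succ_mem s i.isLt (by simpa using him)
    have h2 := congrArg Fin.val (f.injective heq)
    simp only [cnt] at h2 h1
    omega
  · intro hne
    by_contra him
    apply hne
    have h1 := cnt_succ_not_mem s i.isLt (by simpa using him)
    show f _ = f _
    congr 1
    exact Fin.ext h1.symm

lemma phi_injective (hn : 0 < n) : Injective (Phi (n := n) (m := m)) := by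
  rintro ⟨s, f⟩ ⟨t, g⟩ h
  have hw : wrd s ⇑f = wrd t ⇑g := congrArg Subtype.val h
  have hst : s = t := by
    ext i
    rw [mem_iff_ne s f i, mem_iff_ne t g i, hw]
  subst hst
  apply congrArg (Sigma.mk s)
  apply DFunLike.ext
  intro b
  obtain ⟨j, hj, hcnt⟩ := cnt_attain hn s (Nat.lt_succ_iff.mp b.isLt)
  have hfb : f b = wrd s ⇑f ⟨j, hj⟩ := by
    show f b = f _
    congr 1
    exact Fin.ext hcnt.symm
  have hgb : g b = wrd s ⇑g ⟨j, hj⟩ := by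
    show g b = g _
    congr 1
    exact Fin.ext hcnt.symm
  rw [hfb, hgb, hw]

lemma phi_surjective (hn : 0 < n) : Surjective (Phi (n := n) (m := m)) := by
  rintro ⟨w, hw⟩
  have hA : Avoids w := (avoids_iff w).mp hw
  set s : Finset (Fin (n-1)) := chg w with hs
  -- w is constant on cnt-fibers
  have fib : ∀ j2 j1 : ℕ, ∀ (h1 : j1 < n) (h2 : j2 < n), j1 ≤ j2 → cnt s j1 = cnt s j2 →
      w ⟨j1, h1⟩ = w ⟨j2, h2⟩ := by
    intro j2
    induction j2 with
    | zero =>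
      intro j1 h1 h2 hle _
      have : j1 = 0 := by omega
      subst this; rfl
    | succ j2 ih =>
      intro j1 h1 h2 hle hc
      by_cases hEq : j1 = j2 + 1
      · subst hEq; rfl
      have hle' : j1 ≤ j2 := by omega
      have hm1 := cnt_mono s hle'
      have hm2 := cnt_mono s (show j2 ≤ j2 + 1 by omega)
      have hstep : cnt s (j2 + 1) = cnt s j2 := by omega
      have hj2n : j2 < n - 1 := by omega
      have hnm : (⟨j2, hj2n⟩ : Fin (n-1)) ∉ s := by
        intro hmem
        have := cnt_succ_mem s hj2n hmem
        omega
      have hw2 : w ⟨j2, by omega⟩ = w ⟨j2 + 1, h2⟩ := by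
        by_contra hne
        apply hnm
        simp only [hs, chg, Finset.mem_filter, Finset.mem_univ, true_and]
        exact hne
      exact (ih j1 h1 (by omega) hle' (by omega)).trans hw2
  have hattain : ∀ b : Fin (s.card + 1), ∃ j, j < n ∧ cnt s j = (b : ℕ) :=
    fun b => cnt_attain hn s (Nat.lt_succ_iff.mp b.isLt)
  choose idx hidx1 hidx2 using hattain
  set f : Fin (s.card + 1) → Fin m := fun b => w ⟨idx b, hidx1 b⟩ with hf
  have key : ∀ b b' : Fin (s.card + 1), b < b' → f b ≠ f b' := by
    intro b b' hbb' hfe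
    have hcb := hidx2 b
    have hcb' := hidx2 b'
    have hvlt : (b : ℕ) < (b' : ℕ) := Fin.lt_def.mp hbb'
    have hidxlt : idx b < idx b' := by
      by_contra hcon
      push_neg at hcon
      have := cnt_mono s hcon
      omega
    -- find a change position between idx b and idx b'
    have hcardlt : (s.filter (fun i => i.val < idx b)).card <
        (s.filter (fun i => i.val < idx b')).card := by
      show cnt s (idx b) < cnt s (idx b')
      omega
    obtain ⟨i, hi1, hi2⟩ : ∃ i, i ∈ s.filter (fun i => i.val < idx b') ∧
        i ∉ s.filter (fun i => i.val < idx b) := by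
      by_contra hcon
      push_neg at hcon
      exact absurd (Finset.card_le_card hcon) (not_le.mpr hcardlt)
    simp only [Finset.mem_filter] at hi1 hi2
    have his : i ∈ s := hi1.1
    have hilt : (i : ℕ) < idx b' := hi1.2
    have hige : idx b ≤ (i : ℕ) := by
      by_contra hcon
      exact hi2 ⟨his, by omega⟩
    have hin : (i : ℕ) < n := by omega
    have hin1 : (i : ℕ) + 1 < n := by have := hidx1 b'; omega
    have hw1 : w ⟨(i : ℕ), hin⟩ = w ⟨idx b, hidx1 b⟩ :=
      ctg hA (Fin.le_def.mpr (by simpa using hige)) (Fin.le_def.mpr (by simpa using le_of_lt hilt)) hfe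
    have hw2 : w ⟨(i : ℕ) + 1, hin1⟩ = w ⟨idx b, hidx1 b⟩ :=
      ctg hA (Fin.le_def.mpr (by simp; omega)) (Fin.le_def.mpr (by simp; omega)) hfe
    have : w ⟨(i : ℕ), by have := i.isLt; omega⟩ ≠ w ⟨(i : ℕ) + 1, by have := i.isLt; omega⟩ := by
      have := his
      simp only [hs, chg, Finset.mem_filter, Finset.mem_univ, true_and] at this
      exact this
    exact this (hw1.trans hw2.symm)
  have finj : Injective f := by
    intro b b' hfe
    by_contra hne
    rcases lt_or_gt_of_ne hne with h | h
    · exact key b b' h hfe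
    · exact key b' b h hfe.symm
  refine ⟨⟨s, ⟨f, finj⟩⟩, ?_⟩
  apply Subtype.ext
  funext j
  show f ⟨cnt s (j : ℕ), _⟩ = w j
  set b : Fin (s.card + 1) := ⟨cnt s (j : ℕ), Nat.lt_succ_of_le (cnt_le s (j : ℕ))⟩ with hb
  have hcnteq : cnt s (idx b) = cnt s (j : ℕ) := hidx2 b
  have : w ⟨idx b, hidx1 b⟩ = w ⟨(j : ℕ), j.isLt⟩ := by
    rcases le_total (idx b) (j : ℕ) with hle | hle
    · exact fib (j : ℕ) (idx b) (hidx1 b) j.isLt hle hcnteq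
    · exact (fib (idx b) (j : ℕ) j.isLt (hidx1 b) hle hcnteq.symm).symm
  simpa using this

lemma card_avoiding (hn : 0 < n) :
    Nat.card {w : Fin n → Fin m // ¬ Contains121 w ∧ ¬ Contains212 w} =
      ∑ j ∈ Finset.range n, (n - 1).choose j * m.descFactorial (j + 1) := by
  rw [← Nat.card_eq_of_bijective Phi ⟨phi_injective hn, phi_surjective hn⟩]
  rw [Nat.card_eq_fintype_card, Fintype.card_sigma]
  simp only [Fintype.card_embedding_eq, Fintype.card_fin]
  have h1 : ∑ s : Finset (Fin (n-1)), m.descFactorial (s.card + 1) =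
      ∑ j ∈ Finset.range ((n-1) + 1), (n-1).choose j • m.descFactorial (j + 1) := by
    rw [← Finset.powerset_univ]
    have := Finset.sum_powerset_apply_card (fun c => m.descFactorial (c + 1))
      (x := (Finset.univ : Finset (Fin (n-1))))
    simpa using this
  rw [h1]
  have hr : (n - 1) + 1 = n := by omega
  rw [hr]
  simp [smul_eq_mul]

end Words121

theorem count_words_121_212 (m n : ℕ) (hm : 1 ≤ m) (hn : 1 ≤ n) :
    Nat.card {w : Fin n → Fin m // ¬ Contains121 w ∧ ¬ Contains212 w} =
      ∑ k ∈ Finset.Icc 1 (min n m),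
        Nat.choose m k * (k * Nat.descFactorial (n - 1) (k - 1)) := by
  rw [Words121.card_avoiding hn]
  have hext : ∑ k ∈ Finset.Icc 1 (min n m),
      Nat.choose m k * (k * Nat.descFactorial (n - 1) (k - 1)) =
      ∑ k ∈ Finset.Icc 1 n, Nat.choose m k * (k * Nat.descFactorial (n - 1) (k - 1)) := by
    apply Finset.sum_subset
    · intro x hx
      simp only [Finset.mem_Icc] at hx ⊢
      omega
    · intro x hx hnx
      simp only [Finset.mem_Icc] at hx hnx
      have : m < x := by omega
      rw [Nat.choose_eq_zero_of_lt this, zero_mul]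
  rw [hext]
  have : Finset.Icc 1 n = Finset.Ico 1 (n + 1) := by
    rw [Finset.Ico_add_one_right_eq_Icc]
  rw [this, Finset.sum_Ico_eq_sum_range]
  have hr : n + 1 - 1 = n := by omega
  rw [hr]
  apply Finset.sum_congr rfl
  intro j _
  rw [Nat.add_comm 1 j]
  rw [Nat.descFactorial_eq_factorial_mul_choose m (j + 1),
    Nat.descFactorial_eq_factorial_mul_choose (n - 1)]
  have h1 : (j + 1) - 1 = j := by omega
  rw [h1, Nat.factorial_succ]
  ring
end

section
/- For integers m, n ≥ 1, the number of words of length n over {1,...,m} avoiding both patterns 1-11 and 1-12 equals the coefficient of x^n in the polynomial Σ_{k=0}^{m} C(m,k) · (1+x)^k · ∏_{i=1}^{k} ((1+x)^i − 1). -/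
open Polynomial

/-- `w` contains the generalized pattern 1-11: ∃ i < j < n with w i = w j = w (j+1). -/
def Contains111 {n m : ℕ} (w : Fin n → Fin m) : Prop :=
  ∃ i j k : Fin n, i < j ∧ (j : ℕ) + 1 = (k : ℕ) ∧ w i = w j ∧ w j = w k

open Finset

section MsumCore
variable {α : Type*} [DecidableEq α] {M : Type*} [AddCommMonoid M] {N : Type*} [AddCommMonoid N]

/-- Sum of `f` over all duplicate-free lists with entries in `T`. -/
noncomputable def Msum (T : Finset α) (f : List α → M) : M :=
  f [] + ∑ x ∈ T.attach, Msum (T.erase x.1) (fun l => f (x.1 :: l))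
termination_by T.card
decreasing_by exact Finset.card_erase_lt_of_mem x.2

theorem Msum_def (T : Finset α) (f : List α → M) :
    Msum T f = f [] + ∑ x ∈ T, Msum (T.erase x) (fun l => f (x :: l)) := by
  rw [Msum, Finset.sum_attach T (fun x => Msum (T.erase x) (fun l => f (x :: l)))]

theorem Msum_congr_support {T : Finset α} {f g : List α → M}
    (h : ∀ l : List α, l.Nodup → (∀ x ∈ l, x ∈ T) → f l = g l) : Msum T f = Msum T g := by
  induction T using Finset.strongInduction generalizing f g with
  | _ T ih =>
    rw [Msum_def, Msum_def, h [] List.nodup_nil (by simp)]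
    congr 1
    refine Finset.sum_congr rfl fun x hx => ?_
    refine ih _ (Finset.erase_ssubset hx) fun l hl hmem => ?_
    refine h (x :: l) ?_ ?_
    · exact List.nodup_cons.2 ⟨fun hxl => (Finset.mem_erase.1 (hmem x hxl)).1 rfl, hl⟩
    · intro y hy
      rcases List.mem_cons.1 hy with rfl | hy
      · exact hx
      · exact Finset.mem_of_mem_erase (hmem y hy)

theorem Msum_add (T : Finset α) (f g : List α → M) :
    Msum T (fun l => f l + g l) = Msum T f + Msum T g := by
  induction T using Finset.strongInduction generalizing f g with
  | _ T ih =>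
    rw [Msum_def, Msum_def, Msum_def]
    have : ∀ x ∈ T, Msum (T.erase x) (fun l => f (x :: l) + g (x :: l))
        = Msum (T.erase x) (fun l => f (x :: l)) + Msum (T.erase x) (fun l => g (x :: l)) :=
      fun x hx => ih _ (Finset.erase_ssubset hx) _ _
    rw [Finset.sum_congr rfl this, Finset.sum_add_distrib]
    abel

theorem Msum_zero (T : Finset α) : Msum T (fun _ => (0 : M)) = 0 := by
  induction T using Finset.strongInduction with
  | _ T ih =>
    rw [Msum_def]
    rw [Finset.sum_congr rfl fun x hx => ih _ (Finset.erase_ssubset hx)]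
    simp

theorem Msum_hom (φ : M →+ N) (T : Finset α) (f : List α → M) :
    φ (Msum T f) = Msum T (fun l => φ (f l)) := by
  induction T using Finset.strongInduction generalizing f with
  | _ T ih =>
    rw [Msum_def, Msum_def, map_add, map_sum]
    congr 1
    exact Finset.sum_congr rfl fun x hx => ih _ (Finset.erase_ssubset hx) _

theorem Msum_sum {β : Type*} (T : Finset α) (A : Finset β) (F : β → List α → M) :
    Msum T (fun l => ∑ x ∈ A, F x l) = ∑ x ∈ A, Msum T (F x) := by
  classical
  induction A using Finset.induction with
  | empty => simpa using Msum_zero T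
  | insert _ _ hx ih =>
    rw [Finset.sum_insert hx, ← ih, ← Msum_add]
    congr 1
    funext l
    rw [Finset.sum_insert hx]

/-- Peeling off a distinguished element `b`. -/
theorem Msum_peel (T : Finset α) (f : List α → M) (b : α) (hb : b ∈ T) :
    Msum T f = Msum (T.erase b)
      (fun t => f t + ∑ p ∈ Finset.range (t.length + 1), f (t.insertIdx p b)) := by
  induction T using Finset.strongInduction generalizing f with
  | _ T ih =>
    have hLHS : Msum T f = f [] + Msum (T.erase b) (fun l => f (b :: l))
        + ∑ x ∈ T.erase b, Msum (T.erase x) (fun l => f (x :: l)) := by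
      rw [Msum_def T f, ← Finset.add_sum_erase T _ hb]
      abel
    have hsplit : ∀ x ∈ T.erase b, Msum (T.erase x) (fun l => f (x :: l))
        = Msum ((T.erase b).erase x) (fun t => f (x :: t)
            + ∑ p ∈ Finset.range (t.length + 1), f (x :: t.insertIdx p b)) := by
      intro x hx
      have hxT : x ∈ T := Finset.mem_of_mem_erase hx
      have hbx : b ∈ T.erase x :=
        Finset.mem_erase.2 ⟨fun h => (Finset.mem_erase.1 hx).1 h.symm, hb⟩
      rw [ih _ (Finset.erase_ssubset hxT) (fun l => f (x :: l)) hbx,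
        Finset.erase_right_comm]
    have hmid : Msum (T.erase b) (fun l => f (b :: l))
        = f [b] + ∑ x ∈ T.erase b, Msum ((T.erase b).erase x) (fun t => f (b :: x :: t)) :=
      Msum_def (T.erase b) (fun l => f (b :: l))
    have hRHS : Msum (T.erase b)
        (fun t => f t + ∑ p ∈ Finset.range (t.length + 1), f (t.insertIdx p b))
        = (f [] + f [b])
          + ∑ x ∈ T.erase b, (Msum ((T.erase b).erase x) (fun t => f (b :: x :: t))
            + Msum ((T.erase b).erase x) (fun t => f (x :: t)
                + ∑ p ∈ Finset.range (t.length + 1), f (x :: t.insertIdx p b))) := by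
      rw [Msum_def (T.erase b)]
      congr 1
      · show f [] + ∑ p ∈ Finset.range 1, f ([].insertIdx p b) = f [] + f [b]
        simp [List.insertIdx_zero]
      · refine Finset.sum_congr rfl fun x hx => ?_
        rw [← Msum_add]
        apply Msum_congr_support
        intro t _ _
        show f (x :: t) + ∑ p ∈ Finset.range ((x :: t).length + 1), f ((x :: t).insertIdx p b)
          = f (b :: x :: t) + (f (x :: t)
            + ∑ p ∈ Finset.range (t.length + 1), f (x :: t.insertIdx p b))
        rw [List.length_cons,
          Finset.sum_range_succ' (fun p => f ((x :: t).insertIdx p b)) (t.length + 1)]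
        simp only [List.insertIdx_succ_cons, List.insertIdx_zero]
        abel
    rw [hLHS, Finset.sum_congr rfl hsplit, hmid, hRHS, Finset.sum_add_distrib]
    abel

end MsumCore
open Finset

section Stats
variable {α : Type*} [LinearOrder α]

/-- Number of inversions of a list. -/
def linv : List α → ℕ
  | [] => 0
  | x :: t => t.countP (fun y => decide (y < x)) + linv t

@[simp] theorem linv_nil : linv ([] : List α) = 0 := rfl

@[simp] theorem linv_cons (x : α) (t : List α) :
    linv (x :: t) = t.countP (fun y => decide (y < x)) + linv t := rfl

theorem countP_insertIdx (t : List α) (p : ℕ) (b : α) (hp : p ≤ t.length) (q : α → Bool) :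
    (t.insertIdx p b).countP q = t.countP q + if q b then 1 else 0 := by
  have hperm := List.perm_insertIdx b t hp
  rw [hperm.countP_eq]
  simp [List.countP_cons]

theorem linv_insertIdx (t : List α) (p : ℕ) (b : α) (hp : p ≤ t.length)
    (hb : ∀ y ∈ t, y < b) : linv (t.insertIdx p b) = linv t + (t.length - p) := by
  induction p generalizing t with
  | zero =>
    simp only [List.insertIdx_zero, linv, Nat.sub_zero]
    rw [List.countP_eq_length.2 (fun y hy => by simpa using hb y hy)]
    omega
  | succ p ih =>
    match t with
    | [] => simp at hp
    | x :: t' =>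
      rw [List.insertIdx_succ_cons, linv_cons, linv_cons]
      rw [ih t' (by simpa using hp) (fun y hy => hb y (List.mem_cons_of_mem _ hy))]
      rw [countP_insertIdx t' p b (by simpa using hp)]
      have hbx : ¬ (b < x) := not_lt.2 (le_of_lt (hb x (List.mem_cons_self)))
      simp only [List.length_cons, decide_eq_true_eq]
      rw [if_neg hbx]
      have hlen : p ≤ t'.length := by simpa using hp
      omega
end Stats

section Binom

/-- guarded binomial coefficient -/
def chg (a r k : ℕ) : ℕ := if r < k then 0 else Nat.choose a (r - k)

theorem chg_zero_of_lt {a r k : ℕ} (h : r < k) : chg a r k = 0 := if_pos h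

theorem hockey (a B t : ℕ) :
    Nat.choose B (t + 1) + ∑ j ∈ Finset.range a, Nat.choose (j + B) t
      = Nat.choose (a + B) (t + 1) := by
  induction a with
  | zero => simp
  | succ a ih =>
    rw [Finset.sum_range_succ, ← add_assoc, ih]
    have : a + 1 + B = (a + B) + 1 := by omega
    rw [this, Nat.choose_succ_succ' (a + B) t]
    omega

theorem chg_split (a B r k : ℕ) :
    chg (a + B) (r + 1) (k + 1)
      = chg B r k + ∑ j ∈ Finset.range a, chg (j + B) r (k + 1) := by
  rcases lt_trichotomy r k with h | h | h
  · rw [chg_zero_of_lt (by omega), chg_zero_of_lt h]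
    simp [chg_zero_of_lt (show r < k + 1 by omega)]
  · subst h
    rw [chg, if_neg (by omega), chg, if_neg (by omega)]
    simp [chg_zero_of_lt (show r < r + 1 by omega)]
  · obtain ⟨t, rfl⟩ : ∃ t, r = k + (t + 1) := ⟨r - k - 1, by omega⟩
    rw [chg, if_neg (by omega), chg, if_neg (by omega)]
    have h1 : k + (t + 1) + 1 - (k + 1) = t + 1 := by omega
    have h2 : k + (t + 1) - k = t + 1 := by omega
    rw [h1, h2, ← hockey a B t]
    congr 1
    refine Finset.sum_congr rfl fun j _ => ?_
    rw [chg, if_neg (by omega)]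
    congr 1
    omega

end Binom

section Rank
variable {α : Type*} [LinearOrder α] [DecidableEq α] {M : Type*} [AddCommMonoid M]

/-- number of elements of `A` below `x` -/
def rkLT (A : Finset α) (x : α) : ℕ := (A.filter (fun y => y < x)).card

theorem sum_rank (A : Finset α) (f : ℕ → M) :
    ∑ x ∈ A, f (rkLT A x) = ∑ j ∈ Finset.range A.card, f j := by
  suffices H : ∀ (n : ℕ) (A : Finset α), A.card = n →
      ∑ x ∈ A, f (rkLT A x) = ∑ j ∈ Finset.range A.card, f j from H A.card A rfl
  intro n
  induction n with
  | zero =>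
    intro A hn
    rw [Finset.card_eq_zero.1 hn]
    simp
  | succ n ih =>
    intro A hn
    have hne : A.Nonempty := Finset.card_pos.1 (by omega)
    set b := A.max' hne with hbdef
    have hb : b ∈ A := A.max'_mem hne
    have hcard : (A.erase b).card = n := by
      rw [Finset.card_erase_of_mem hb, hn]
      omega

    have hrankb : rkLT A b = n := by
      have : A.filter (fun y => y < b) = A.erase b := by
        ext y
        simp only [Finset.mem_filter, Finset.mem_erase]
        constructor
        · rintro ⟨hy, hlt⟩; exact ⟨ne_of_lt hlt, hy⟩
        · rintro ⟨hne', hy⟩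
          exact ⟨hy, lt_of_le_of_ne (A.le_max' y hy) hne'⟩
      rw [rkLT, this, hcard]
    have hrank : ∀ x ∈ A.erase b, rkLT A x = rkLT (A.erase b) x := by
      intro x hx
      have hxb : x < b := Finset.lt_max'_of_mem_erase_max' A hne hx
      unfold rkLT
      congr 1
      ext y
      simp only [Finset.mem_filter, Finset.mem_erase]
      constructor
      · rintro ⟨hy, hlt⟩; exact ⟨⟨ne_of_lt (lt_trans hlt hxb), hy⟩, hlt⟩
      · rintro ⟨⟨_, hy⟩, hlt⟩; exact ⟨hy, hlt⟩
    have hrank' : ∀ x ∈ A.erase b, f (rkLT A x) = f (rkLT (A.erase b) x) :=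
      fun x hx => congrArg f (hrank x hx)
    rw [← Finset.add_sum_erase A _ hb, hrankb,
      Finset.sum_congr rfl hrank', ih _ hcard, hcard, hn, Finset.sum_range_succ]
    abel

end Rank
open Finset

section Wst
variable {α : Type*} [LinearOrder α] [DecidableEq α]

def rkGT (A : Finset α) (x : α) : ℕ := (A.filter (fun y => x < y)).card

def wst : Finset α → List α → ℕ
  | S, [] => S.card
  | S, x :: t => rkGT S x + wst (insert x S) t

@[simp] theorem wst_nil (S : Finset α) : wst S ([] : List α) = S.card := rfl

@[simp] theorem wst_cons (S : Finset α) (x : α) (t : List α) :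
    wst S (x :: t) = rkGT S x + wst (insert x S) t := rfl

def invS (S : Finset α) (l : List α) : ℕ := (l.map (fun x => rkGT S x)).sum

theorem invS_insert (S : Finset α) (x : α) (t : List α) (hx : x ∉ S) :
    invS (insert x S) t = invS S t + t.countP (fun y => decide (y < x)) := by
  induction t with
  | nil => simp [invS]
  | cons z t ih =>
    simp only [invS, List.map_cons, List.sum_cons, List.countP_cons] at *
    have hgt : rkGT (insert x S) z = rkGT S z + if z < x then 1 else 0 := by
      unfold rkGT
      rw [Finset.filter_insert]
      by_cases h : z < x
      · rw [if_pos h, if_pos h, Finset.card_insert_of_notMem (fun hc => hx (Finset.mem_of_mem_filter _ hc))]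
      · rw [if_neg h, if_neg h, add_zero]
    rw [hgt, ih]
    by_cases h : z < x <;> simp [h] <;> omega

theorem wst_eq (l : List α) : ∀ S : Finset α, l.Nodup → (∀ x ∈ l, x ∉ S) →
    wst S l = invS S l + linv l + l.length + S.card := by
  induction l with
  | nil => intro S _ _; simp [invS]
  | cons x t ih =>
    intro S hnd hdisj
    have hx : x ∉ S := hdisj x (List.mem_cons_self)
    have hnd' : t.Nodup := (List.nodup_cons.1 hnd).2
    have hxt : x ∉ t := (List.nodup_cons.1 hnd).1
    have hdisj' : ∀ y ∈ t, y ∉ insert x S := by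
      intro y hy
      simp only [Finset.mem_insert, not_or]
      exact ⟨fun h => hxt (h ▸ hy), hdisj y (List.mem_cons_of_mem _ hy)⟩
    rw [wst_cons, ih (insert x S) hnd' hdisj', invS_insert S x t hx,
      Finset.card_insert_of_notMem hx]
    simp only [invS, List.map_cons, List.sum_cons, linv_cons, List.length_cons]
    omega

end Wst

section Mahon
variable {α : Type*} [LinearOrder α] [DecidableEq α] {R : Type*} [CommRing R]

theorem Msum_len_inv (T : Finset α) (k : ℕ) (y : R) :
    Msum T (fun l => if l.length = k then y ^ (linv l) else 0)
      = (T.card.choose k) • ∏ i ∈ Finset.Icc 1 k, (∑ j ∈ Finset.range i, y ^ j) := by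
  suffices H : ∀ (n : ℕ) (T : Finset α), T.card = n → ∀ k,
      Msum T (fun l => if l.length = k then y ^ (linv l) else 0)
        = (T.card.choose k) • ∏ i ∈ Finset.Icc 1 k, (∑ j ∈ Finset.range i, y ^ j) from
    H T.card T rfl k
  intro n
  induction n with
  | zero =>
    intro T hT k
    rw [Finset.card_eq_zero.1 hT]
    rw [Msum_def]
    simp only [Finset.card_empty, Finset.sum_empty, add_zero, List.length_nil]
    rcases Nat.eq_zero_or_pos k with rfl | hk
    · simp
    · rw [if_neg (by omega), Nat.choose_eq_zero_of_lt (by omega), zero_smul]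
  | succ n ih =>
    intro T hT k
    have hne : T.Nonempty := Finset.card_pos.1 (by omega)
    set b := T.max' hne with hbdef
    have hb : b ∈ T := T.max'_mem hne
    have hcard : (T.erase b).card = n := by
      rw [Finset.card_erase_of_mem hb, hT]; omega
    rw [Msum_peel T _ b hb, Msum_add]
    rcases Nat.eq_zero_or_pos k with rfl | hk
    · -- k = 0 : the inserted terms vanish
      have h2 : Msum (T.erase b) (fun t => ∑ p ∈ Finset.range (t.length + 1),
          (fun l => if l.length = 0 then y ^ (linv l) else 0) (t.insertIdx p b)) = 0 := by
        refine Eq.trans (Msum_congr_support fun t _ hmem => ?_) (Msum_zero _)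
        refine Finset.sum_eq_zero fun p hp => ?_
        have hp' : p ≤ t.length := by simpa [Nat.lt_succ_iff] using hp
        have hlen : (t.insertIdx p b).length = t.length + 1 := List.length_insertIdx_of_le_length hp' _
        simp only [hlen]
        exact if_neg (by omega)
      rw [h2, add_zero, ih _ hcard 0]
      simp
    · obtain ⟨k', rfl⟩ : ∃ k', k = k' + 1 := ⟨k - 1, by omega⟩
      have h2 : Msum (T.erase b) (fun t => ∑ p ∈ Finset.range (t.length + 1),
          (fun l => if l.length = k' + 1 then y ^ (linv l) else 0) (t.insertIdx p b))
          = Msum (T.erase b) (fun t => (if t.length = k' then y ^ (linv t) else 0)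
              * (∑ j ∈ Finset.range (k' + 1), y ^ j)) := by
        apply Msum_congr_support
        intro t hnd hmem
        have hblt : ∀ x ∈ t, x < b := fun x hx =>
          Finset.lt_max'_of_mem_erase_max' T hne (hmem x hx)
        have hstep : ∀ p ∈ Finset.range (t.length + 1),
            (fun l => if l.length = k' + 1 then y ^ (linv l) else 0) (t.insertIdx p b)
            = if t.length = k' then y ^ (linv t + (t.length - p)) else 0 := by
          intro p hp
          have hp' : p ≤ t.length := by simpa [Nat.lt_succ_iff] using hp
          have hlen : (t.insertIdx p b).length = t.length + 1 := List.length_insertIdx_of_le_length hp' _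
          by_cases h : t.length = k'
          · simp only [hlen, h, if_pos rfl, linv_insertIdx t p b hp' hblt]
          · simp only [hlen]
            rw [if_neg (by omega), if_neg h]
        rw [Finset.sum_congr rfl hstep]
        by_cases hlt : t.length = k'
        · simp only [if_pos hlt]
          subst hlt
          rw [Finset.mul_sum]
          rw [← Finset.sum_range_reflect (fun j => y ^ (linv t) * y ^ j) (t.length + 1)]
          refine Finset.sum_congr rfl fun p hp => ?_
          rw [← pow_add]
          congr 1
        · simp only [if_neg hlt]
          simp
      rw [h2]
      have h3 : Msum (T.erase b) (fun t => (if t.length = k' then y ^ (linv t) else 0)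
            * (∑ j ∈ Finset.range (k' + 1), y ^ j))
          = Msum (T.erase b) (fun t => if t.length = k' then y ^ (linv t) else 0)
            * (∑ j ∈ Finset.range (k' + 1), y ^ j) := by
        simpa using (Msum_hom (AddMonoidHom.mulRight (∑ j ∈ Finset.range (k' + 1), y ^ j))
          (T.erase b) (fun t => if t.length = k' then y ^ (linv t) else 0)).symm
      rw [h3, ih _ hcard (k' + 1), ih _ hcard k', hcard, hT]
      rw [Finset.prod_Icc_succ_top (by omega : 1 ≤ k' + 1)]
      rw [smul_mul_assoc, ← add_smul]
      congr 1
      rw [Nat.choose_succ_succ' n k']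
      omega
end Mahon
section Big
open Finset
variable {α : Type*} [LinearOrder α] [Fintype α] [DecidableEq α]

def bOK : Option α → α → Bool
  | none, _ => true
  | some c, x => decide (x < c)

def cnt : Finset α → Option α → ℕ → ℕ
  | _, _, 0 => 1
  | S, b, r+1 => ∑ x ∈ Finset.univ.filter (fun x => bOK b x = true),
      cnt (insert x S) (if x ∈ S then some x else none) r

@[simp] theorem cnt_zero (S : Finset α) (b : Option α) : cnt S b 0 = 1 := rfl

theorem cnt_succ (S : Finset α) (b : Option α) (r : ℕ) :
    cnt S b (r + 1) = ∑ x ∈ Finset.univ.filter (fun x => bOK b x = true),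
      cnt (insert x S) (if x ∈ S then some x else none) r := rfl

def rkBtw (S : Finset α) (z c : α) : ℕ := (S.filter (fun y => z < y ∧ y < c)).card

noncomputable def MM (S : Finset α) (r : ℕ) : ℕ :=
  Msum Sᶜ (fun l => chg (wst S l) r l.length)

noncomputable def MM' (S : Finset α) (c : α) (r : ℕ) : ℕ :=
  chg (rkLT S c) r 0 + ∑ z ∈ Sᶜ.filter (fun z => z < c),
    Msum (insert z S)ᶜ (fun l => chg (rkBtw S z c + wst (insert z S) l) r (l.length + 1))

theorem pieceA (A : Finset α) (r : ℕ) :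
    ∑ x ∈ A, chg (rkLT A x) r 0 = chg A.card (r + 1) 0 := by
  rw [sum_rank A (fun j => chg j r 0)]
  have h0 : ∀ j, chg j r 0 = Nat.choose j r := fun j => by simp [chg]
  have h1 : chg A.card (r + 1) 0 = Nat.choose A.card (r + 1) := by simp [chg]
  rw [h1, Finset.sum_congr rfl fun j _ => h0 j]
  have := hockey A.card 0 r
  simp only [add_zero] at this
  rw [← this, Nat.choose_eq_zero_of_lt (by omega), zero_add]

theorem pieceB (A : Finset α) (B r k : ℕ) :
    chg B r k + ∑ x ∈ A, chg (rkLT A x + B) r (k + 1) = chg (A.card + B) (r + 1) (k + 1) := by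
  rw [sum_rank A (fun j => chg (j + B) r (k + 1)), chg_split]

theorem swap1 (S : Finset α) (G : α → α → ℕ) :
    ∑ x ∈ S, ∑ z ∈ Sᶜ.filter (fun z => z < x), G x z
      = ∑ z ∈ Sᶜ, ∑ x ∈ S.filter (fun y => z < y), G x z := by
  simp only [Finset.sum_filter]
  exact Finset.sum_comm

theorem swap2 (S : Finset α) (c : α) (G : α → α → ℕ) :
    ∑ x ∈ S.filter (fun x => x < c), ∑ z ∈ Sᶜ.filter (fun z => z < x), G x z
      = ∑ z ∈ Sᶜ.filter (fun z => z < c), ∑ x ∈ S.filter (fun y => z < y ∧ y < c), G x z := by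
  have L : ∑ x ∈ S.filter (fun x => x < c), ∑ z ∈ Sᶜ.filter (fun z => z < x), G x z
      = ∑ x ∈ S, ∑ z ∈ Sᶜ, if z < x ∧ x < c then G x z else 0 := by
    rw [Finset.sum_filter]
    refine Finset.sum_congr rfl fun x _ => ?_
    by_cases h : x < c
    · rw [if_pos h, Finset.sum_filter]
      exact Finset.sum_congr rfl fun z _ => by simp [h]
    · rw [if_neg h]
      exact (Finset.sum_eq_zero fun z _ => if_neg (by tauto)).symm
  have R : ∑ z ∈ Sᶜ.filter (fun z => z < c), ∑ x ∈ S.filter (fun y => z < y ∧ y < c), G x z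
      = ∑ z ∈ Sᶜ, ∑ x ∈ S, if z < x ∧ x < c then G x z else 0 := by
    rw [Finset.sum_filter]
    refine Finset.sum_congr rfl fun z _ => ?_
    by_cases h : z < c
    · rw [if_pos h, Finset.sum_filter]
    · rw [if_neg h]
      exact (Finset.sum_eq_zero fun x _ =>
        if_neg (fun hc => h (lt_trans hc.1 hc.2))).symm
  rw [L, R]
  exact Finset.sum_comm

theorem rkBtw_eq_rkLT (S : Finset α) (z x : α) :
    rkBtw S z x = rkLT (S.filter (fun y => z < y)) x := by
  rw [rkBtw, rkLT, Finset.filter_filter]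

theorem rkLT_filter_lt (S : Finset α) (c x : α) (hx : x < c) :
    rkLT S x = rkLT (S.filter (fun y => y < c)) x := by
  rw [rkLT, rkLT, Finset.filter_filter]
  congr 1
  ext y
  simp only [Finset.mem_filter]
  exact ⟨fun ⟨h1, h2⟩ => ⟨h1, lt_trans h2 hx, h2⟩, fun ⟨h1, _, h3⟩ => ⟨h1, h3⟩⟩

theorem rkBtw_eq_rkLT' (S : Finset α) (z c x : α) (hxc : x < c) :
    rkBtw S z x = rkLT (S.filter (fun y => z < y ∧ y < c)) x := by
  rw [rkBtw, rkLT, Finset.filter_filter]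
  congr 1
  ext y
  simp only [Finset.mem_filter]
  constructor
  · rintro ⟨h1, h2, h3⟩; exact ⟨h1, ⟨h2, lt_trans h3 hxc⟩, h3⟩
  · rintro ⟨h1, ⟨h2, _⟩, h4⟩; exact ⟨h1, h2, h4⟩

theorem cnt_eq_MM (r : ℕ) : ∀ S : Finset α,
    (cnt S none r = MM S r) ∧ (∀ c, cnt S (some c) r = MM' S c r) := by
  induction r with
  | zero =>
    intro S
    constructor
    · rw [cnt_zero, MM, Msum_def]
      have h2 : ∀ x ∈ Sᶜ, Msum (Sᶜ.erase x)
          (fun l => (fun l => chg (wst S l) 0 l.length) (x :: l)) = 0 := fun x _ =>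
        Eq.trans (Msum_congr_support fun l _ _ => by simp [chg]) (Msum_zero _)
      rw [Finset.sum_congr rfl h2]
      simp [chg]
    · intro c
      rw [cnt_zero, MM']
      have h2 : ∀ z ∈ Sᶜ.filter (fun z => z < c), Msum (insert z S)ᶜ
          (fun l => chg (rkBtw S z c + wst (insert z S) l) 0 (l.length + 1)) = 0 := fun z _ =>
        Eq.trans (Msum_congr_support fun l _ _ => by simp [chg]) (Msum_zero _)
      rw [Finset.sum_congr rfl h2]
      simp [chg]
  | succ r ih =>
    intro S
    have ihn : ∀ S' : Finset α, cnt S' none r = MM S' r := fun S' => (ih S').1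
    have ihs : ∀ (S' : Finset α) c, cnt S' (some c) r = MM' S' c r := fun S' => (ih S').2
    have hz : ∀ z, Msum (insert z S)ᶜ (fun l =>
          chg (rkGT S z + wst (insert z S) l) (r + 1) (l.length + 1))
        = MM (insert z S) r
          + ∑ x ∈ S.filter (fun y => z < y), Msum (insert z S)ᶜ (fun l =>
              chg (rkBtw S z x + wst (insert z S) l) r (l.length + 1)) := by
      intro z
      rw [MM, ← Msum_sum, ← Msum_add]
      refine Msum_congr_support fun l _ _ => ?_
      have hc : ∀ x ∈ S.filter (fun y => z < y),
          chg (rkBtw S z x + wst (insert z S) l) r (l.length + 1)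
          = chg (rkLT (S.filter (fun y => z < y)) x + wst (insert z S) l) r (l.length + 1) :=
        fun x _ => by rw [rkBtw_eq_rkLT]
      show chg (rkGT S z + wst (insert z S) l) (r + 1) (l.length + 1)
        = chg (wst (insert z S) l) r l.length + ∑ x ∈ S.filter (fun y => z < y),
            chg (rkBtw S z x + wst (insert z S) l) r (l.length + 1)
      rw [Finset.sum_congr rfl hc, pieceB (S.filter (fun y => z < y)) _ r l.length]
      rfl
    have hzc : ∀ (c : α), ∀ z, Msum (insert z S)ᶜ (fun l =>
          chg (rkBtw S z c + wst (insert z S) l) (r + 1) (l.length + 1))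
        = MM (insert z S) r
          + ∑ x ∈ S.filter (fun y => z < y ∧ y < c), Msum (insert z S)ᶜ (fun l =>
              chg (rkBtw S z x + wst (insert z S) l) r (l.length + 1)) := by
      intro c z
      rw [MM, ← Msum_sum, ← Msum_add]
      refine Msum_congr_support fun l _ _ => ?_
      have hc : ∀ x ∈ S.filter (fun y => z < y ∧ y < c),
          chg (rkBtw S z x + wst (insert z S) l) r (l.length + 1)
          = chg (rkLT (S.filter (fun y => z < y ∧ y < c)) x + wst (insert z S) l) r
              (l.length + 1) := by
        intro x hx
        rw [rkBtw_eq_rkLT' S z c x (Finset.mem_filter.1 hx).2.2]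
      show chg (rkBtw S z c + wst (insert z S) l) (r + 1) (l.length + 1)
        = chg (wst (insert z S) l) r l.length + ∑ x ∈ S.filter (fun y => z < y ∧ y < c),
            chg (rkBtw S z x + wst (insert z S) l) r (l.length + 1)
      rw [Finset.sum_congr rfl hc, pieceB (S.filter (fun y => z < y ∧ y < c)) _ r l.length]
      rfl
    constructor
    · -- bound `none`
      have hsplit : cnt S none (r + 1)
          = (∑ x ∈ S, cnt S (some x) r) + ∑ z ∈ Sᶜ, cnt (insert z S) none r := by
        rw [cnt_succ]
        have huniv : Finset.univ.filter (fun x => bOK (none : Option α) x = true)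
            = Finset.univ := by simp [bOK]
        rw [huniv, ← Finset.sum_add_sum_compl S]
        congr 1
        · exact Finset.sum_congr rfl fun x hx => by
            rw [if_pos hx, Finset.insert_eq_self.2 hx]
        · exact Finset.sum_congr rfl fun x hx => by rw [if_neg (Finset.mem_compl.1 hx)]
      rw [hsplit, Finset.sum_congr rfl fun x _ => ihs S x,
        Finset.sum_congr rfl fun z _ => ihn (insert z S)]
      simp only [MM']
      rw [Finset.sum_add_distrib, pieceA S r,
        swap1 S (fun x z => Msum (insert z S)ᶜ (fun l =>
          chg (rkBtw S z x + wst (insert z S) l) r (l.length + 1)))]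
      rw [MM, Msum_def]
      have hfun : ∀ z ∈ Sᶜ, Msum (Sᶜ.erase z)
          (fun l => (fun l => chg (wst S l) (r + 1) l.length) (z :: l))
          = MM (insert z S) r
            + ∑ x ∈ S.filter (fun y => z < y), Msum (insert z S)ᶜ (fun l =>
                chg (rkBtw S z x + wst (insert z S) l) r (l.length + 1)) := by
        intro z _
        rw [show Sᶜ.erase z = (insert z S)ᶜ from Finset.compl_insert.symm]
        rw [← hz z]
        apply Msum_congr_support
        intro l _ _
        simp only [wst_cons, List.length_cons]
      rw [Finset.sum_congr rfl hfun, Finset.sum_add_distrib]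
      simp only [wst_nil, List.length_nil]
      omega
    · -- bound `some c`
      intro c
      have hsplit : cnt S (some c) (r + 1)
          = (∑ x ∈ S.filter (fun x => x < c), cnt S (some x) r)
            + ∑ z ∈ Sᶜ.filter (fun z => z < c), cnt (insert z S) none r := by
        rw [cnt_succ]
        have hset : Finset.univ.filter (fun x => bOK (some c) x = true)
            = Finset.univ.filter (fun x => x < c) := by simp [bOK]
        rw [hset, ← Finset.sum_filter_add_sum_filter_not
          (Finset.univ.filter (fun x => x < c)) (· ∈ S)]
        congr 1
        · have he : (Finset.univ.filter (fun x => x < c)).filter (· ∈ S)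
              = S.filter (fun x => x < c) := by
            ext y; simp [and_comm]
          rw [he]
          exact Finset.sum_congr rfl fun x hx => by
            have hxS : x ∈ S := (Finset.mem_filter.1 hx).1
            rw [if_pos hxS, Finset.insert_eq_self.2 hxS]
        · have he : (Finset.univ.filter (fun x => x < c)).filter (fun x => ¬ (x ∈ S))
              = Sᶜ.filter (fun z => z < c) := by
            ext y; simp [and_comm]
          rw [he]
          exact Finset.sum_congr rfl fun z hz => by
            rw [if_neg (Finset.mem_compl.1 (Finset.mem_filter.1 hz).1)]
      rw [hsplit, Finset.sum_congr rfl fun x _ => ihs S x,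
        Finset.sum_congr rfl fun z _ => ihn (insert z S)]
      simp only [MM']
      rw [Finset.sum_add_distrib]
      have hA : ∑ x ∈ S.filter (fun x => x < c), chg (rkLT S x) r 0
          = chg (rkLT S c) (r + 1) 0 := by
        have : ∀ x ∈ S.filter (fun x => x < c),
            chg (rkLT S x) r 0 = chg (rkLT (S.filter (fun y => y < c)) x) r 0 := fun x hx => by
          rw [rkLT_filter_lt S c x (Finset.mem_filter.1 hx).2]
        rw [Finset.sum_congr rfl this, pieceA (S.filter (fun y => y < c)) r]
        rfl
      rw [hA, swap2 S c (fun x z => Msum (insert z S)ᶜ (fun l =>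
        chg (rkBtw S z x + wst (insert z S) l) r (l.length + 1)))]
      rw [Finset.sum_congr rfl fun z _ => hzc c z, Finset.sum_add_distrib]
      omega
end Big
section Poly
open Finset Polynomial
variable {α : Type*} [LinearOrder α] [Fintype α] [DecidableEq α]

theorem invS_empty (l : List α) : invS (∅ : Finset α) l = 0 := by
  simp [invS, rkGT]

theorem wst_empty {l : List α} (h : l.Nodup) :
    wst (∅ : Finset α) l = linv l + l.length := by
  rw [wst_eq l ∅ h (fun x _ => Finset.notMem_empty x), invS_empty]
  simp

theorem MM_coeff (n : ℕ) :
    ((MM (∅ : Finset α) n : ℕ) : ℤ)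
      = Polynomial.coeff
        (∑ k ∈ Finset.range (Fintype.card α + 1),
          ((Fintype.card α).choose k : ℤ)
            • ((1 + X) ^ k * ∏ i ∈ Finset.Icc 1 k, ((1 + X) ^ i - 1)) : Polynomial ℤ) n := by
  classical
  set N := Fintype.card α with hN
  -- Step A: the polynomial identity
  have geom : ∀ i : ℕ, ((1 + X : Polynomial ℤ) ^ i - 1)
      = (∑ j ∈ Finset.range i, (1 + X) ^ j) * X := by
    intro i
    have := geom_sum_mul (1 + X : Polynomial ℤ) i
    rw [add_sub_cancel_left] at this
    rw [← this]
  have hprod : ∀ k : ℕ, (∏ i ∈ Finset.Icc 1 k, ((1 + X : Polynomial ℤ) ^ i - 1))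
      = (∏ i ∈ Finset.Icc 1 k, (∑ j ∈ Finset.range i, (1 + X) ^ j)) * X ^ k := by
    intro k
    rw [Finset.prod_congr rfl fun i _ => geom i, Finset.prod_mul_distrib, Finset.prod_const,
      Nat.card_Icc]
    simp
  have main : Msum (Finset.univ : Finset α)
        (fun l => (1 + X : Polynomial ℤ) ^ (linv l) * ((1 + X) * X) ^ l.length)
      = ∑ k ∈ Finset.range (N + 1),
          ((N.choose k : ℤ)
            • ((1 + X) ^ k * ∏ i ∈ Finset.Icc 1 k, ((1 + X) ^ i - 1)) : Polynomial ℤ) := by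
    have h1 : Msum (Finset.univ : Finset α)
        (fun l => (1 + X : Polynomial ℤ) ^ (linv l) * ((1 + X) * X) ^ l.length)
        = Msum (Finset.univ : Finset α)
          (fun l => ∑ k ∈ Finset.range (N + 1),
            (if l.length = k then (1 + X : Polynomial ℤ) ^ (linv l) else 0)
              * ((1 + X) * X) ^ k) := by
      apply Msum_congr_support
      intro l hnd _
      have hlen : l.length ≤ N := hnd.length_le_card
      have : ∀ k ∈ Finset.range (N + 1),
          (if l.length = k then (1 + X : Polynomial ℤ) ^ (linv l) else 0) * ((1 + X) * X) ^ k
          = if l.length = k then (1 + X) ^ (linv l) * ((1 + X) * X) ^ k else 0 := by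
        intro k _
        by_cases h : l.length = k <;> simp [h]
      rw [Finset.sum_congr rfl this, Finset.sum_ite_eq (Finset.range (N + 1)) l.length
        (fun k => (1 + X : Polynomial ℤ) ^ (linv l) * ((1 + X) * X) ^ k)]
      rw [if_pos (Finset.mem_range.2 (by omega))]
    rw [h1, Msum_sum]
    refine Finset.sum_congr rfl fun k _ => ?_
    have h2 : Msum (Finset.univ : Finset α)
        (fun l => (if l.length = k then (1 + X : Polynomial ℤ) ^ (linv l) else 0)
          * ((1 + X) * X) ^ k)
        = Msum (Finset.univ : Finset α)
          (fun l => if l.length = k then (1 + X : Polynomial ℤ) ^ (linv l) else 0)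
          * ((1 + X) * X) ^ k := by
      simpa using (Msum_hom (AddMonoidHom.mulRight (((1 + X : Polynomial ℤ) * X) ^ k))
        Finset.univ
        (fun l => if l.length = k then (1 + X : Polynomial ℤ) ^ (linv l) else 0)).symm
    rw [h2, Msum_len_inv (Finset.univ : Finset α) k (1 + X : Polynomial ℤ),
      Finset.card_univ, ← hN, Nat.cast_smul_eq_nsmul ℤ, smul_mul_assoc]
    congr 1
    rw [hprod k, mul_pow]
    ring
  -- Step B: the coefficient extraction
  have hcast : ((MM (∅ : Finset α) n : ℕ) : ℤ)
      = Msum (Finset.univ : Finset α)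
        (fun l => ((chg (wst (∅ : Finset α) l) n l.length : ℕ) : ℤ)) := by
    rw [MM, Finset.compl_empty]
    exact Msum_hom (Nat.castAddMonoidHom ℤ) _ _
  have hpt : Msum (Finset.univ : Finset α)
        (fun l => ((chg (wst (∅ : Finset α) l) n l.length : ℕ) : ℤ))
      = Msum (Finset.univ : Finset α)
        (fun l => Polynomial.coeff
          ((1 + X : Polynomial ℤ) ^ (linv l) * ((1 + X) * X) ^ l.length) n) := by
    apply Msum_congr_support
    intro l hnd _
    have hw := wst_empty hnd
    have hre : ((1 + X : Polynomial ℤ) ^ (linv l) * ((1 + X) * X) ^ l.length)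
        = (1 + X) ^ (linv l + l.length) * X ^ l.length := by
      rw [pow_add, mul_pow]
      ring
    rw [hre, Polynomial.coeff_mul_X_pow', Polynomial.coeff_one_add_X_pow ℤ, hw, chg]
    by_cases h : l.length ≤ n
    · rw [if_pos h, if_neg (by omega)]
    · rw [if_neg h, if_pos (by omega)]
      simp
  have hco : Msum (Finset.univ : Finset α)
        (fun l => Polynomial.coeff
          ((1 + X : Polynomial ℤ) ^ (linv l) * ((1 + X) * X) ^ l.length) n)
      = Polynomial.coeff (Msum (Finset.univ : Finset α)
          (fun l => (1 + X : Polynomial ℤ) ^ (linv l) * ((1 + X) * X) ^ l.length)) n := by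
    exact (Msum_hom (Polynomial.lcoeff ℤ n).toAddMonoidHom _ _).symm
  rw [hcast, hpt, hco, main]
end Poly

section Words
open Finset
variable {α : Type*} [LinearOrder α] [Fintype α] [DecidableEq α]

def goodB : Finset α → Option α → List α → Bool
  | _, _, [] => true
  | S, b, x :: t => bOK b x && goodB (insert x S) (if x ∈ S then some x else none) t

@[simp] theorem goodB_nil (S : Finset α) (b : Option α) : goodB S b [] = true := rfl

theorem goodB_cons (S : Finset α) (b : Option α) (x : α) (t : List α) :
    goodB S b (x :: t)
      = (bOK b x && goodB (insert x S) (if x ∈ S then some x else none) t) := rfl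

theorem card_good (r : ℕ) : ∀ (S : Finset α) (b : Option α),
    Fintype.card {w : Fin r → α // goodB S b (List.ofFn w) = true} = cnt S b r := by
  induction r with
  | zero =>
    intro S b
    have hall : ∀ w : Fin 0 → α, goodB S b (List.ofFn w) = true := fun w => by
      rw [List.ofFn_zero]; rfl
    rw [Fintype.card_congr (Equiv.subtypeUnivEquiv hall), cnt_zero]
    simp
  | succ r ih =>
    intro S b
    have E : {w : Fin (r + 1) → α // goodB S b (List.ofFn w) = true}
        ≃ (Σ x : α, {t : Fin r → α // goodB S b (x :: List.ofFn t) = true}) := by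
      refine ⟨fun w => ⟨w.1 0, fun i => w.1 i.succ, ?_⟩,
        fun p => ⟨Fin.cons p.1 p.2.1, ?_⟩, ?_, ?_⟩
      · rw [← List.ofFn_succ]; exact w.2
      · rw [List.ofFn_succ]
        simpa [Fin.cons_zero, Fin.cons_succ] using p.2.2
      · intro w
        apply Subtype.ext
        exact Fin.cons_self_tail w.1
      · rintro ⟨x, t, ht⟩
        apply Sigma.ext
        · rfl
        · apply heq_of_eq
          apply Subtype.ext
          funext i
          simp
    rw [Fintype.card_congr E, Fintype.card_sigma]
    have hx : ∀ x : α, Fintype.card {t : Fin r → α // goodB S b (x :: List.ofFn t) = true}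
        = if bOK b x = true
            then cnt (insert x S) (if x ∈ S then some x else none) r else 0 := by
      intro x
      by_cases hb : bOK b x = true
      · rw [if_pos hb, ← ih (insert x S) (if x ∈ S then some x else none)]
        apply Fintype.card_congr
        apply Equiv.subtypeEquivRight
        intro t
        rw [goodB_cons, hb, Bool.true_and]
      · rw [if_neg hb]
        rw [Fintype.card_eq_zero_iff]
        refine ⟨fun t => ?_⟩
        have := t.2
        rw [goodB_cons, Bool.and_eq_true] at this
        exact hb this.1
    rw [Finset.sum_congr rfl fun x _ => hx x, cnt_succ, Finset.sum_filter]

theorem goodB_iff (l : List α) : ∀ (S : Finset α) (b : Option α),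
    goodB S b l = true ↔
      ((∀ c, b = some c → ∀ h : 0 < l.length, l[0]'h < c) ∧
       ∀ j (hj : j + 1 < l.length),
         (l[j]'(by omega) ∈ S ∨ ∃ i, ∃ _ : i < j, l[i]'(by omega) = l[j]'(by omega)) →
           l[j+1]'hj < l[j]'(by omega)) := by
  induction l with
  | nil => intro S b; simp
  | cons x t ih =>
    intro S b
    rw [goodB_cons, Bool.and_eq_true, ih (insert x S) (if x ∈ S then some x else none)]
    constructor
    · rintro ⟨hb, hc1, hc2⟩
      constructor
      · rintro c rfl h
        simpa [bOK] using hb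
      · intro j hj hyp
        match j with
        | 0 =>
          have hxS : x ∈ S := by
            rcases hyp with h | ⟨i, hi, _⟩
            · simpa using h
            · omega
          have h0 : 0 < t.length := by simpa using hj
          have := hc1 x (by rw [if_pos hxS]) h0
          simpa using this
        | j' + 1 =>
          have hj' : j' + 1 < t.length := by simpa using hj
          have hyp' : (t[j']'(by omega) ∈ insert x S
              ∨ ∃ i, ∃ _ : i < j', t[i]'(by omega) = t[j']'(by omega)) := by
            rcases hyp with h | ⟨i, hi, heq⟩
            · left; exact Finset.mem_insert_of_mem (by simpa using h)
            · match i with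
              | 0 =>
                left
                apply Finset.mem_insert.2
                left
                have : x = t[j']'(by omega) := by simpa using heq
                exact this.symm
              | i' + 1 =>
                right
                exact ⟨i', by omega, by simpa using heq⟩
          have := hc2 j' hj' hyp'
          simpa using this
    · rintro ⟨h1, h2⟩
      refine ⟨?_, ?_, ?_⟩
      · match b with
        | none => rfl
        | some c =>
          have := h1 c rfl (by simp)
          simpa [bOK] using this
      · intro c hc h
        by_cases hxS : x ∈ S
        · rw [if_pos hxS] at hc
          injection hc with hc
          subst hc
          have := h2 0 (by simpa using h) (Or.inl (by simpa using hxS))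
          simpa using this
        · rw [if_neg hxS] at hc
          cases hc
      · intro j hj hyp
        have hyp' : ((x :: t)[j+1]'(by simpa using Nat.lt_of_succ_lt hj) ∈ S
            ∨ ∃ i, ∃ _ : i < j + 1,
              (x :: t)[i]'(by simp; omega) = (x :: t)[j+1]'(by simpa using Nat.lt_of_succ_lt hj)) := by
          rcases hyp with h | ⟨i, hi, heq⟩
          · rcases Finset.mem_insert.1 (by simpa using h) with h' | h'
            · right
              refine ⟨0, by omega, ?_⟩
              simpa using h'.symm
            · left; simpa using h'
          · right
            exact ⟨i + 1, by omega, by simpa using heq⟩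
        have := h2 (j + 1) (by simpa using hj) hyp'
        simpa using this

end Words

section Final
open Finset Polynomial

theorem good_iff_avoid {n m : ℕ} (w : Fin n → Fin m) :
    goodB (∅ : Finset (Fin m)) none (List.ofFn w) = true
      ↔ (¬ Contains111 w ∧ ¬ Contains112 w) := by
  rw [goodB_iff]
  simp only [List.length_ofFn, List.getElem_ofFn]
  constructor
  · rintro ⟨-, h2⟩
    constructor
    · rintro ⟨i, j, k, hij, hjk, he1, he2⟩
      have hjn : (j : ℕ) + 1 < n := by have := k.isLt; omega
      have hcon := h2 j.1 hjn (Or.inr ⟨i.1, hij, by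
        simpa [Fin.eta] using he1⟩)
      have hk : k = ⟨(j : ℕ) + 1, hjn⟩ := by
        apply Fin.ext
        simp only [Fin.val_mk]
        omega
      rw [hk] at he2
      simp only [Fin.eta] at hcon
      exact absurd (he2 ▸ hcon) (lt_irrefl _)
    · rintro ⟨i, j, k, hij, hjk, he1, he2⟩
      have hjn : (j : ℕ) + 1 < n := by have := k.isLt; omega
      have hcon := h2 j.1 hjn (Or.inr ⟨i.1, hij, by
        simpa [Fin.eta] using he1⟩)
      have hk : k = ⟨(j : ℕ) + 1, hjn⟩ := by
        apply Fin.ext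
        simp only [Fin.val_mk]
        omega
      rw [hk] at he2
      simp only [Fin.eta] at hcon
      exact absurd (lt_trans he2 hcon) (lt_irrefl _)
  · rintro ⟨h111, h112⟩
    refine ⟨?_, ?_⟩
    · intro c hc h
      exact absurd hc (by simp)
    intro j hj hyp
    rcases hyp with h | ⟨i, hi, heq⟩
    · exact absurd h (Finset.notMem_empty _)
    · have hin : i < n := by omega
      have hjn : j < n := by omega
      by_contra hlt
      have hle : w ⟨j, hjn⟩ ≤ w ⟨j + 1, hj⟩ := not_lt.1 (by
        intro hcon
        exact hlt (by simpa using hcon))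
      have hijF : (⟨i, hin⟩ : Fin n) < ⟨j, hjn⟩ := by
        simp only [Fin.mk_lt_mk]
        exact hi
      rcases lt_or_eq_of_le hle with hlt2 | heq2
      · refine h112 ⟨⟨i, hin⟩, ⟨j, hjn⟩, ⟨j + 1, hj⟩, hijF, rfl, ?_, hlt2⟩
        simpa using heq
      · refine h111 ⟨⟨i, hin⟩, ⟨j, hjn⟩, ⟨j + 1, hj⟩, hijF, rfl, ?_, heq2⟩
        simpa using heq

end Final

theorem count_words_111_112 (m n : ℕ) (hm : 1 ≤ m) (hn : 1 ≤ n) :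
    (Nat.card {w : Fin n → Fin m // ¬ Contains111 w ∧ ¬ Contains112 w} : ℤ) =
      Polynomial.coeff
        (∑ k ∈ Finset.range (m + 1),
          (Nat.choose m k : ℤ) • ((1 + X) ^ k * ∏ i ∈ Finset.Icc 1 k, ((1 + X) ^ i - 1))
          : Polynomial ℤ) n := by
  classical
  have e1 : Nat.card {w : Fin n → Fin m // ¬ Contains111 w ∧ ¬ Contains112 w}
      = Nat.card {w : Fin n → Fin m //
          goodB (∅ : Finset (Fin m)) none (List.ofFn w) = true} :=
    Nat.card_congr (Equiv.subtypeEquivRight fun w => (good_iff_avoid w).symm)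
  rw [e1, Nat.card_eq_fintype_card, card_good n ∅ none, (cnt_eq_MM n ∅).1]
  have h := MM_coeff (α := Fin m) n
  rwa [Fintype.card_fin] at h
end
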